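/- arXiv:1012.4881 — 7 statements merged into one kernel-verified Lean document; each statement's English description precedes it below -/
import Mathlib

section
/- Let C₁ ⊆ ℝ² be convex and C₂ = C₁ + t for a nonzero vector t. If p ∈ C₁ \ C₂, q ∈ C₂, and q = p + s·t for some real s, then s ≠ 0 and in fact s > 0. Symmetrically, if p ∈ C₂ \ C₁, q ∈ C₁, and q = p + s·t, then s < 0. -/
theorem stmt_2 (C₁ C₂ : Set (EuclideanSpace ℝ (Fin 2))) (hC : Convex ℝ C₁)
    (t : EuclideanSpace ℝ (Fin 2)) (ht : t ≠ 0)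
    (hC₂ : C₂ = (fun x => x + t) '' C₁) :
    (∀ p q : EuclideanSpace ℝ (Fin 2), ∀ s : ℝ,
      p ∈ C₁ \ C₂ → q ∈ C₂ → q = p + s • t → 0 < s) ∧
    (∀ p q : EuclideanSpace ℝ (Fin 2), ∀ s : ℝ,
      p ∈ C₂ \ C₁ → q ∈ C₁ → q = p + s • t → s < 0) := by
  constructor
  · rintro p q s ⟨hp₁, hp₂⟩ hq rfl
    rw [hC₂] at hq hp₂
    obtain ⟨x, hx, hxe⟩ := hq
    have hx' : x = p + (s - 1) • t := by
      have : x + t = p + s • t := hxe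
      have h := congrArg (fun z => z - t) this
      simp only [add_sub_cancel_right] at h
      rw [h]; module
    rw [hx'] at hx
    by_contra hs
    push_neg at hs
    have hb0 : (0:ℝ) < 1 - s := by linarith
    have hb : (0:ℝ) ≤ (1 - s)⁻¹ := le_of_lt (inv_pos.mpr hb0)
    have ha : (0:ℝ) ≤ 1 - (1 - s)⁻¹ := by
      have : (1 - s)⁻¹ ≤ 1 := by
        rw [inv_le_one_iff₀]; right; linarith
      linarith
    have hsum : (1 - (1 - s)⁻¹) + (1 - s)⁻¹ = 1 := by ring
    have hmem := hC hp₁ hx ha hb hsum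
    apply hp₂
    refine ⟨(1 - (1 - s)⁻¹) • p + (1 - s)⁻¹ • (p + (s - 1) • t), hmem, ?_⟩
    have hne : (1 - s) ≠ 0 := ne_of_gt hb0
    show (1 - (1 - s)⁻¹) • p + (1 - s)⁻¹ • (p + (s - 1) • t) + t = p
    have key : (1 - s)⁻¹ * (s - 1) = -1 := by
      field_simp
      ring
    have : (1 - (1 - s)⁻¹) • p + (1 - s)⁻¹ • (p + (s - 1) • t) + t
        = p + ((1 - s)⁻¹ * (s - 1)) • t + t := by module
    rw [this, key]; module
  · rintro p q s ⟨hp₂, hp₁⟩ hq rfl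
    rw [hC₂] at hp₂
    obtain ⟨x, hx, hxe⟩ := hp₂
    have hx' : x = p - t := by
      have h := congrArg (fun z => z - t) hxe
      simpa using h
    rw [hx'] at hx
    by_contra hs
    push_neg at hs
    have hb0 : (0:ℝ) < s + 1 := by linarith
    have hb : (0:ℝ) ≤ (s + 1)⁻¹ := le_of_lt (inv_pos.mpr hb0)
    have ha : (0:ℝ) ≤ 1 - (s + 1)⁻¹ := by
      have : (s + 1)⁻¹ ≤ 1 := by
        rw [inv_le_one_iff₀]; right; linarith
      linarith
    have hsum : (1 - (s + 1)⁻¹) + (s + 1)⁻¹ = 1 := by ring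
    have hmem := hC hx hq ha hb hsum
    apply hp₁
    have hne : (s + 1) ≠ 0 := ne_of_gt hb0
    have key : (s + 1)⁻¹ * (s + 1) = 1 := inv_mul_cancel₀ hne
    have : (1 - (s + 1)⁻¹) • (p - t) + (s + 1)⁻¹ • (p + s • t)
        = p - t + ((s + 1)⁻¹ * (s + 1)) • t := by module
    rw [this, key] at hmem
    simpa using hmem
end

section
/- Let C ⊆ ℝ² be convex, and let C₁, C₂ be translates of C. Suppose a, b ∈ C₁ \ C₂ and c, d ∈ C₂ \ C₁. Then the open segments (a,b) and (c,d) do not cross, i.e., they do not intersect in a point interior to both segments. -/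
set_option maxHeartbeats 1000000

private theorem seg2 {V : Type*} [AddCommGroup V] [Module ℝ V] {D : Set V} (hD : Convex ℝ D)
    {P Q z : V} (hP : P ∈ D) (hQ : Q ∈ D) {σ : ℝ} (h0 : 0 ≤ σ) (h1 : σ ≤ 1)
    (hz : z = σ • P + (1 - σ) • Q) : z ∈ D := by
  rw [hz]; exact hD hP hQ h0 (by linarith) (by ring)

private theorem master {V : Type*} [AddCommGroup V] [Module ℝ V] {D : Set V} (hD : Convex ℝ D)
    {a b c d x t : V} {α l p q : ℝ}
    (hα0 : 0 < α) (hα1 : α < 1) (hl0 : 0 < l) (hl1 : l < 1)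
    (hb2 : b = α⁻¹ • (x - (1 - α) • a)) (hd2 : d = l⁻¹ • (x - (1 - l) • c))
    (ht : t = p • (a - x) + q • (c - x))
    (ha : a ∈ D) (hb : b ∈ D) (hct : c - t ∈ D) (hdt : d - t ∈ D)
    (hat : a - t ∉ D) (hbt : b - t ∉ D) (hcn : c ∉ D) (hdn : d ∉ D) : False := by
  have hα0' : α ≠ 0 := ne_of_gt hα0
  have hl0' : l ≠ 0 := ne_of_gt hl0
  have h1α : (1:ℝ) - α ≠ 0 := by intro h; nlinarith
  have h1l : (1:ℝ) - l ≠ 0 := by intro h; nlinarith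
  have Ha : 0 < p → -p ≤ q → l * q ≤ (1 - l) * p → False := by
    intro hp h1 h2
    have hp' : p ≠ 0 := ne_of_gt hp
    have h1p : (1:ℝ) + p ≠ 0 := by intro h; nlinarith
    have hν0 : 0 ≤ 1 - l - l * q / p := by
      have : l * q / p ≤ 1 - l := by rw [div_le_iff₀ hp]; linarith
      linarith
    have hν1 : 1 - l - l * q / p ≤ 1 := by
      have : -l ≤ l * q / p := by rw [le_div_iff₀ hp]; nlinarith
      linarith
    have hQ : (1 - l - l * q / p) • (c - t) + (1 - (1 - l - l * q / p)) • (d - t) ∈ D :=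
      hD hct hdt hν0 (by linarith) (by ring)
    refine hat (seg2 hD ha hQ (σ := 1 / (1 + p)) (by positivity) ?_ ?_)
    · rw [div_le_one (by linarith)]; linarith
    · rw [hd2, ht]; match_scalars <;> field_simp <;> ring
  have Hb : p < 0 → α * p ≤ (1 - α) * q → l * (1 - α) * q + α * (1 - l) * p ≤ 0 → False := by
    intro hp h1 h2
    have hp' : p ≠ 0 := ne_of_lt hp
    have hap : α * p < 0 := by nlinarith
    have hden : 0 < 1 - α - α * p := by nlinarith
    have hden' : (1:ℝ) - α - α * p ≠ 0 := ne_of_gt hden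
    have hap' : α * p ≠ 0 := ne_of_lt hap
    have hν0 : 0 ≤ 1 - l + l * (1 - α) * q / (α * p) := by
      have : -(1 - l) ≤ l * (1 - α) * q / (α * p) := by
        rw [le_div_iff_of_neg hap]; nlinarith
      linarith
    have hν1 : 1 - l + l * (1 - α) * q / (α * p) ≤ 1 := by
      have : l * (1 - α) * q / (α * p) ≤ l := by
        rw [div_le_iff_of_neg hap]; nlinarith
      linarith
    have hQ : (1 - l + l * (1 - α) * q / (α * p)) • (c - t)
        + (1 - (1 - l + l * (1 - α) * q / (α * p))) • (d - t) ∈ D :=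
      hD hct hdt hν0 (by linarith) (by ring)
    refine hbt (seg2 hD hb hQ (σ := (1 - α) / (1 - α - α * p))
      (div_nonneg (by linarith) (le_of_lt hden)) ?_ ?_)
    · rw [div_le_one hden]; nlinarith
    · rw [hb2, hd2, ht]; match_scalars <;> field_simp <;> ring
  have Hc : q < 0 → (1 - α) * q ≤ α * p → p + q ≤ 0 → False := by
    intro hq h1 h2
    have hq' : q ≠ 0 := ne_of_lt hq
    have hq1 : (0:ℝ) < 1 - q := by linarith
    have hq1' : (1:ℝ) - q ≠ 0 := ne_of_gt hq1
    have hμ0 : 0 ≤ 1 - α - α * p / q := by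
      have : α * p / q ≤ 1 - α := by rw [div_le_iff_of_neg hq]; linarith
      linarith
    have hμ1 : 1 - α - α * p / q ≤ 1 := by
      have : -α ≤ α * p / q := by rw [le_div_iff_of_neg hq]; nlinarith
      linarith
    have hP : (1 - α - α * p / q) • a + (1 - (1 - α - α * p / q)) • b ∈ D :=
      hD ha hb hμ0 (by linarith) (by ring)
    refine hcn (seg2 hD hP hct (σ := -q / (1 - q))
      (div_nonneg (by linarith) (le_of_lt hq1)) ?_ ?_)
    · rw [div_le_one hq1]; linarith
    · rw [hb2, ht]; match_scalars <;> field_simp <;> ring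
  have Hd : 0 < q → (1 - l) * p ≤ l * q → 0 ≤ l * (1 - α) * q + α * (1 - l) * p → False := by
    intro hq h1 h2
    have hq' : q ≠ 0 := ne_of_gt hq
    have hlq : 0 < l * q := by nlinarith
    have hden : 0 < 1 - l + l * q := by nlinarith
    have hden' : (1:ℝ) - l + l * q ≠ 0 := ne_of_gt hden
    have hlq' : l * q ≠ 0 := ne_of_gt hlq
    have hμ0 : 0 ≤ 1 - α + α * (1 - l) * p / (l * q) := by
      have : -(1 - α) ≤ α * (1 - l) * p / (l * q) := by
        rw [le_div_iff₀ hlq]; nlinarith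
      linarith
    have hμ1 : 1 - α + α * (1 - l) * p / (l * q) ≤ 1 := by
      have : α * (1 - l) * p / (l * q) ≤ α := by
        rw [div_le_iff₀ hlq]; nlinarith
      linarith
    have hP : (1 - α + α * (1 - l) * p / (l * q)) • a
        + (1 - (1 - α + α * (1 - l) * p / (l * q))) • b ∈ D :=
      hD ha hb hμ0 (by linarith) (by ring)
    refine hdn (seg2 hD hP hdt (σ := l * q / (1 - l + l * q))
      (div_nonneg (le_of_lt hlq) (le_of_lt hden)) ?_ ?_)
    · rw [div_le_one hden]; linarith
    · rw [hb2, hd2, ht]; match_scalars <;> field_simp <;> ring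
  have h1αp : (0:ℝ) < 1 - α := by linarith
  have h1lp : (0:ℝ) < 1 - l := by linarith
  rcases lt_trichotomy p 0 with hp | hp | hp
  · rcases le_or_gt (α * p) ((1 - α) * q) with h1 | h1
    · rcases le_or_gt (l * (1 - α) * q + α * (1 - l) * p) 0 with h2 | h2
      · exact Hb hp h1 h2
      · have hq : 0 < q := by
          nlinarith [mul_pos hl0 h1αp, mul_neg_of_pos_of_neg (mul_pos hα0 h1lp) hp]
        exact Hd hq (by nlinarith [mul_pos hl0 hq, mul_neg_of_pos_of_neg h1lp hp])
          (le_of_lt h2)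
    · have hq : q < 0 := by
        nlinarith [mul_neg_of_pos_of_neg hα0 hp]
      exact Hc hq (le_of_lt h1) (by linarith)
  · subst hp
    rcases lt_trichotomy q 0 with hq | hq | hq
    · exact Hc hq (by nlinarith [mul_neg_of_pos_of_neg h1αp hq, mul_pos hα0 hα0]) (by linarith)
    · subst hq
      exact hat (by rw [ht]; simpa using ha)
    · exact Hd hq (by nlinarith [mul_pos hl0 hq]) (by nlinarith [mul_pos (mul_pos hl0 h1αp) hq])
  · rcases le_or_gt (-p) q with h1 | h1
    · rcases le_or_gt (l * q) ((1 - l) * p) with h2 | h2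
      · exact Ha hp h1 h2
      · have hq : 0 < q := by nlinarith [mul_pos h1lp hp]
        exact Hd hq (le_of_lt h2)
          (by nlinarith [mul_pos (mul_pos hl0 h1αp) hq, mul_pos (mul_pos hα0 h1lp) hp])
    · exact Hc (by linarith)
        (by nlinarith [mul_neg_of_pos_of_neg h1αp (show q < 0 by linarith), mul_pos hα0 hp])
        (by linarith)

private theorem masterCol {V : Type*} [AddCommGroup V] [Module ℝ V] {D : Set V} (hD : Convex ℝ D)
    {a b c d x t : V} {α l γ : ℝ}
    (hα0 : 0 < α) (hα1 : α < 1) (hl0 : 0 < l) (hl1 : l < 1)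
    (hb2 : b = α⁻¹ • (x - (1 - α) • a)) (hd2 : d = l⁻¹ • (x - (1 - l) • c))
    (hc2 : c = x + γ • (a - x))
    (ha : a ∈ D) (hb : b ∈ D) (hct : c - t ∈ D) (hdt : d - t ∈ D)
    (hat : a - t ∉ D) (hbt : b - t ∉ D) (hcn : c ∉ D) (hdn : d ∉ D) : False := by
  have hα0' : α ≠ 0 := ne_of_gt hα0
  have hl0' : l ≠ 0 := ne_of_gt hl0
  have h1α : (1:ℝ) - α ≠ 0 := by intro h; nlinarith
  have h1l : (1:ℝ) - l ≠ 0 := by intro h; nlinarith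
  have hx : x ∈ D := seg2 hD ha hb (σ := 1 - α) (by linarith) (by linarith)
    (by rw [hb2]; match_scalars <;> field_simp <;> ring)
  have hxt : x - t ∈ D := seg2 hD hct hdt (σ := 1 - l) (by linarith) (by linarith)
    (by rw [hd2]; match_scalars <;> field_simp <;> ring)
  rcases lt_trichotomy γ 0 with hγ | hγ | hγ
  · have hγ' : γ ≠ 0 := ne_of_lt hγ
    by_cases hs : -γ * α / (1 - α) ≤ 1
    · refine hcn (seg2 hD hb hx (σ := -γ * α / (1 - α))
        (div_nonneg (by nlinarith) (by linarith)) hs ?_)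
      rw [hc2, hb2]; match_scalars <;> field_simp <;> ring
    · push_neg at hs
      have hden : 0 < α * (-γ) := by nlinarith
      have hden' : α * -γ ≠ 0 := ne_of_gt hden
      refine hbt (seg2 hD hct hxt (σ := (1 - α) / (α * (-γ)))
        (div_nonneg (by linarith) (le_of_lt hden)) ?_ ?_)
      · rw [div_le_one hden]
        rw [lt_div_iff₀ (by linarith : (0:ℝ) < 1 - α)] at hs
        nlinarith
      · rw [hb2, hc2]; match_scalars <;> field_simp <;> ring
  · refine hcn ?_
    rw [hc2, hγ]
    simpa using hx
  · have hγ' : γ ≠ 0 := ne_of_gt hγ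
    by_cases hγ1 : γ ≤ 1
    · refine hcn (seg2 hD ha hx (σ := γ) (le_of_lt hγ) hγ1 ?_)
      rw [hc2]; match_scalars <;> ring
    · push_neg at hγ1
      refine hat (seg2 hD hct hxt (σ := 1 / γ) (by positivity) ?_ ?_)
      · rw [div_le_one hγ]; linarith
      · rw [hc2]; match_scalars <;> field_simp <;> ring

theorem stmt_4 (C : Set (EuclideanSpace ℝ (Fin 2))) (hC : Convex ℝ C)
    (t₁ t₂ : EuclideanSpace ℝ (Fin 2))
    (C₁ C₂ : Set (EuclideanSpace ℝ (Fin 2)))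
    (hC₁ : C₁ = (fun x => x + t₁) '' C) (hC₂ : C₂ = (fun x => x + t₂) '' C)
    (a b c d : EuclideanSpace ℝ (Fin 2))
    (ha : a ∈ C₁ \ C₂) (hb : b ∈ C₁ \ C₂) (hc : c ∈ C₂ \ C₁) (hd : d ∈ C₂ \ C₁) :
    ¬ ∃ x, x ∈ segment ℝ a b ∧ x ∈ segment ℝ c d ∧
      x ∉ ({a, b, c, d} : Set (EuclideanSpace ℝ (Fin 2))) := by
  rintro ⟨x, hxab, hxcd, hxne⟩
  simp only [Set.mem_insert_iff, Set.mem_singleton_iff, not_or] at hxne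
  obtain ⟨hxa, hxb, hxc, hxd⟩ := hxne
  have hconv : Convex ℝ C₁ := by
    rw [hC₁]
    have heq : (fun x => x + t₁) '' C = (fun x => t₁ + x) '' C := by
      simp [add_comm]
    rw [heq]
    exact hC.translate t₁
  have hmem : ∀ z, z ∈ C₂ ↔ z - (t₂ - t₁) ∈ C₁ := by
    intro z
    rw [hC₁, hC₂]
    simp only [Set.mem_image]
    constructor
    · rintro ⟨y, hy, rfl⟩
      exact ⟨y, hy, by abel⟩
    · rintro ⟨y, hy, hyz⟩
      refine ⟨y, hy, ?_⟩
      have h2 : y + t₁ + (t₂ - t₁) = z := by rw [hyz]; abel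
      rw [← h2]; abel
  rw [segment_eq_image] at hxab hxcd
  obtain ⟨α, ⟨hα0, hα1⟩, hx1⟩ := hxab
  obtain ⟨l, ⟨hl0, hl1⟩, hx2⟩ := hxcd
  have hα0' : α ≠ 0 := by
    rintro rfl; apply hxa; simp at hx1; exact hx1.symm
  have hα1' : α ≠ 1 := by
    rintro rfl; apply hxb; simp at hx1; exact hx1.symm
  have hl0' : l ≠ 0 := by
    rintro rfl; apply hxc; simp at hx2; exact hx2.symm
  have hl1' : l ≠ 1 := by
    rintro rfl; apply hxd; simp at hx2; exact hx2.symm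
  have hα0s : 0 < α := lt_of_le_of_ne hα0 (Ne.symm hα0')
  have hα1s : α < 1 := lt_of_le_of_ne hα1 hα1'
  have hl0s : 0 < l := lt_of_le_of_ne hl0 (Ne.symm hl0')
  have hl1s : l < 1 := lt_of_le_of_ne hl1 hl1'
  have hb2 : b = α⁻¹ • (x - (1 - α) • a) := by
    rw [← hx1]; match_scalars <;> field_simp <;> ring
  have hd2 : d = l⁻¹ • (x - (1 - l) • c) := by
    rw [← hx2]; match_scalars <;> field_simp <;> ring
  set t : EuclideanSpace ℝ (Fin 2) := t₂ - t₁ with htdef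
  have hct : c - t ∈ C₁ := (hmem c).mp hc.1
  have hdt : d - t ∈ C₁ := (hmem d).mp hd.1
  have hat : a - t ∉ C₁ := fun h => ha.2 ((hmem a).mpr h)
  have hbt : b - t ∉ C₁ := fun h => hb.2 ((hmem b).mpr h)
  by_cases hcol : ∃ γ : ℝ, c - x = γ • (a - x)
  · obtain ⟨γ, hγ⟩ := hcol
    have hc2 : c = x + γ • (a - x) := by rw [← hγ]; abel
    exact masterCol hconv hα0s hα1s hl0s hl1s hb2 hd2 hc2
      ha.1 hb.1 hct hdt hat hbt hc.2 hd.2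
  · have hax : a - x ≠ 0 := sub_ne_zero.mpr (fun h => hxa h.symm)
    have hind : LinearIndependent ℝ ![c - x, a - x] := by
      rw [linearIndependent_fin2]
      exact ⟨by simpa using hax, fun γ hγ => hcol ⟨γ, by simpa using hγ.symm⟩⟩
    have hspan : Submodule.span ℝ (Set.range ![c - x, a - x]) = ⊤ :=
      hind.span_eq_top_of_card_eq_finrank (by simp [finrank_euclideanSpace_fin])
    have htmem : t ∈ Submodule.span ℝ ({a - x, c - x} : Set (EuclideanSpace ℝ (Fin 2))) := by
      have h3 : t ∈ (⊤ : Submodule ℝ (EuclideanSpace ℝ (Fin 2))) := trivial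
      rw [← hspan] at h3
      simpa [Matrix.range_cons, Matrix.range_empty, Set.pair_comm] using h3
    obtain ⟨p, q, hpq⟩ := Submodule.mem_span_pair.mp htmem
    have ht : t = p • (a - x) + q • (c - x) := hpq.symm
    exact master hconv hα0s hα1s hl0s hl1s hb2 hd2 ht
      ha.1 hb.1 hct hdt hat hbt hc.2 hd.2
end

section
/- Let C ⊆ ℝ² be convex, P ⊆ ℝ² a finite set, and define the graph G_t(P,C) on vertex set P with an edge {p,q} whenever there is a translate C' of C with C' ∩ P = {p,q}. Then the straight-line drawing of G_t(P,C) is a plane graph: no vertex lies in the relative interior of an edge not incident to it, and no two edges intersect except at common endpoints. -/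
set_option maxHeartbeats 4000000

private lemma conv3 {E : Type*} [AddCommGroup E] [Module ℝ E] {K : Set E} (hK : Convex ℝ K)
    {u w z y : E} (hu : u ∈ K) (hw : w ∈ K) (hz : z ∈ K) {c1 c2 c3 S : ℝ}
    (h1 : 0 ≤ c1) (h2 : 0 ≤ c2) (h3 : 0 ≤ c3) (hS : 0 < S) (hsum : c1 + c2 + c3 = S)
    (hy : c1 • u + c2 • w + c3 • z = S • y) : y ∈ K := by
  have hS' : S ≠ 0 := ne_of_gt hS
  by_cases h0 : c2 + c3 = 0
  · have hc2 : c2 = 0 := by linarith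
    have hc3 : c3 = 0 := by linarith
    have hc1 : c1 = S := by linarith
    have hyu : S • y = S • u := by rw [← hy, hc1, hc2, hc3]; simp
    have : y = u := by
      have := congrArg (fun r => S⁻¹ • r) hyu
      simpa [inv_smul_smul₀ hS'] using this
    exact this ▸ hu
  · have h0' : 0 < c2 + c3 := lt_of_le_of_ne (by linarith) (Ne.symm h0)
    have hm : (c2/(c2+c3)) • w + (c3/(c2+c3)) • z ∈ K :=
      hK hw hz (by positivity) (by positivity) (by field_simp)
    have hmem : (c1/S) • u + ((c2+c3)/S) • ((c2/(c2+c3)) • w + (c3/(c2+c3)) • z) ∈ K :=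
      hK hu hm (by positivity) (by positivity) (by field_simp; linarith)
    have h3' : y = (c1/S) • u + ((c2+c3)/S) • ((c2/(c2+c3)) • w + (c3/(c2+c3)) • z) := by
      have h4 : S⁻¹ • (c1 • u + c2 • w + c3 • z) = y := by rw [hy, inv_smul_smul₀ hS']
      rw [← h4]
      match_scalars <;> (field_simp; try ring)
    exact h3' ▸ hmem

private lemma seg_param {E : Type*} [AddCommGroup E] [Module ℝ E] (x e : E) {s s1 s2 : ℝ}
    (h1 : s1 ≤ s) (h2 : s ≤ s2) (hlt : s1 < s2) :
    x + s • e ∈ segment ℝ (x + s1 • e) (x + s2 • e) := by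
  have hd : s2 - s1 ≠ 0 := by linarith
  refine ⟨(s2 - s)/(s2 - s1), (s - s1)/(s2 - s1), div_nonneg (by linarith) (by linarith),
    div_nonneg (by linarith) (by linarith), by field_simp; ring, ?_⟩
  match_scalars <;> (field_simp; try ring)

theorem stmt_5 (C : Set (EuclideanSpace ℝ (Fin 2))) (hC : Convex ℝ C)
    (P : Set (EuclideanSpace ℝ (Fin 2))) (hP : P.Finite)
    (Edge : EuclideanSpace ℝ (Fin 2) → EuclideanSpace ℝ (Fin 2) → Prop)
    (hEdge : ∀ p q, Edge p q ↔ p ≠ q ∧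
      ∃ t : EuclideanSpace ℝ (Fin 2), ((fun x => x + t) '' C) ∩ P = {p, q}) :
    (∀ p q v, Edge p q → v ∈ P → v ∈ segment ℝ p q → v = p ∨ v = q) ∧
    (∀ p q c d, Edge p q → Edge c d →
      ∀ x, x ∈ segment ℝ p q → x ∈ segment ℝ c d →
        ({p, q} : Set (EuclideanSpace ℝ (Fin 2))) = {c, d} ∨
        (x ∈ ({p, q} : Set (EuclideanSpace ℝ (Fin 2))) ∧
         x ∈ ({c, d} : Set (EuclideanSpace ℝ (Fin 2))))) := by
  classical
  have hconv : ∀ t : EuclideanSpace ℝ (Fin 2), Convex ℝ ((fun x => x + t) '' C) := by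
    intro t
    have h1 : (fun x : EuclideanSpace ℝ (Fin 2) => x + t) '' C = (fun x => t + x) '' C := by
      ext y; constructor <;> rintro ⟨u, hu, rfl⟩
      · exact ⟨u, hu, by show t + u = u + t; exact add_comm t u⟩
      · exact ⟨u, hu, by show u + t = t + u; exact add_comm u t⟩
    rw [h1]; exact hC.translate t
  have hpart1 : ∀ p q v, Edge p q → v ∈ P → v ∈ segment ℝ p q → v = p ∨ v = q := by
    intro p q v hpq hvP hvseg
    obtain ⟨hne, t, hK⟩ := (hEdge p q).1 hpq
    have hp : p ∈ (fun x => x + t) '' C := by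
      have h : p ∈ ((fun x => x + t) '' C) ∩ P := by rw [hK]; simp
      exact h.1
    have hq : q ∈ (fun x => x + t) '' C := by
      have h : q ∈ ((fun x => x + t) '' C) ∩ P := by rw [hK]; simp
      exact h.1
    have hv : v ∈ (fun x => x + t) '' C := (hconv t).segment_subset hp hq hvseg
    have h : v ∈ ({p, q} : Set (EuclideanSpace ℝ (Fin 2))) := by rw [← hK]; exact ⟨hv, hvP⟩
    simpa using h
  refine ⟨hpart1, ?_⟩
  intro p q c d hpq hcd x hxpq hxcd
  obtain ⟨hpqne, t1, hK1⟩ := (hEdge p q).1 hpq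
  obtain ⟨hcdne, t2, hK2⟩ := (hEdge c d).1 hcd
  set K1 := (fun y : EuclideanSpace ℝ (Fin 2) => y + t1) '' C with hK1def
  set K2 := (fun y : EuclideanSpace ℝ (Fin 2) => y + t2) '' C with hK2def
  have hK1conv : Convex ℝ K1 := hconv t1
  have hK2conv : Convex ℝ K2 := hconv t2
  have hp1 : p ∈ K1 ∧ p ∈ P := by
    have h : p ∈ K1 ∩ P := by rw [hK1]; simp
    exact h
  have hq1 : q ∈ K1 ∧ q ∈ P := by
    have h : q ∈ K1 ∩ P := by rw [hK1]; simp
    exact h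
  have hc2 : c ∈ K2 ∧ c ∈ P := by
    have h : c ∈ K2 ∩ P := by rw [hK2]; simp
    exact h
  have hd2 : d ∈ K2 ∧ d ∈ P := by
    have h : d ∈ K2 ∩ P := by rw [hK2]; simp
    exact h
  -- easy cases: x is an endpoint
  by_cases hxp : x = p
  · right
    refine ⟨by simp [hxp], ?_⟩
    rcases hpart1 c d x hcd (by rw [hxp]; exact hp1.2) hxcd with h | h <;> simp [h]
  by_cases hxq : x = q
  · right
    refine ⟨by simp [hxq], ?_⟩
    rcases hpart1 c d x hcd (by rw [hxq]; exact hq1.2) hxcd with h | h <;> simp [h]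
  by_cases hxc : x = c
  · right
    refine ⟨?_, by simp [hxc]⟩
    rcases hpart1 p q x hpq (by rw [hxc]; exact hc2.2) hxpq with h | h <;> simp [h]
  by_cases hxd : x = d
  · right
    refine ⟨?_, by simp [hxd]⟩
    rcases hpart1 p q x hpq (by rw [hxd]; exact hd2.2) hxpq with h | h <;> simp [h]
  -- coefficients
  obtain ⟨al, be, hal0, hbe0, hab, hx1⟩ := hxpq
  obtain ⟨ga, de, hga0, hde0, hgd, hx2⟩ := hxcd
  have hbe : 0 < be := by
    rcases hbe0.lt_or_eq with h | h
    · exact h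
    · exfalso; apply hxp
      have h1 : al = 1 := by linarith
      rw [← hx1, h1, ← h]; simp
  have hal : 0 < al := by
    rcases hal0.lt_or_eq with h | h
    · exact h
    · exfalso; apply hxq
      have h1 : be = 1 := by linarith
      rw [← hx1, h1, ← h]; simp
  have hde : 0 < de := by
    rcases hde0.lt_or_eq with h | h
    · exact h
    · exfalso; apply hxc
      have h1 : ga = 1 := by linarith
      rw [← hx2, h1, ← h]; simp
  have hga : 0 < ga := by
    rcases hga0.lt_or_eq with h | h
    · exact h
    · exfalso; apply hxd
      have h1 : de = 1 := by linarith
      rw [← hx2, h1, ← h]; simp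
  set e1 := q - p with he1
  set e2 := d - c with he2
  have he1ne : e1 ≠ 0 := sub_ne_zero.mpr (Ne.symm hpqne)
  have he2ne : e2 ≠ 0 := sub_ne_zero.mpr (Ne.symm hcdne)
  have halbe : al = 1 - be := by linarith
  have hgade : ga = 1 - de := by linarith
  have hp' : p = x + (-be) • e1 := by rw [he1, ← hx1, halbe]; module
  have hq' : q = x + al • e1 := by rw [he1, ← hx1, halbe]; module
  have hc' : c = x + (-de) • e2 := by rw [he2, ← hx2, hgade]; module
  have hd' : d = x + ga • e2 := by rw [he2, ← hx2, hgade]; module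
  by_cases hcol : ∃ r : ℝ, e2 = r • e1
  · -- collinear case
    left
    obtain ⟨r, hr⟩ := hcol
    have hrne : r ≠ 0 := by rintro rfl; rw [zero_smul] at hr; exact he2ne hr
    have hc'' : c = x + (-(de * r)) • e1 := by rw [hc', hr]; module
    have hd'' : d = x + (ga * r) • e1 := by rw [hd', hr]; module
    have hinj : ∀ s t : ℝ, x + s • e1 = x + t • e1 → s = t := by
      intro s t h
      exact smul_left_injective ℝ he1ne (add_left_cancel h)
    have hsegpq : ∀ s : ℝ, -be ≤ s → s ≤ al → x + s • e1 ∈ segment ℝ p q := by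
      intro s hs1 hs2
      rw [hp', hq']
      exact seg_param x e1 hs1 hs2 (by linarith)
    rcases lt_or_gt_of_ne hrne with hrneg | hrpos
    · -- r < 0 : coord of c is -(de*r) > 0, coord of d is ga*r < 0
      have hcpos : 0 < -(de * r) := by have := mul_pos hde (neg_pos.mpr hrneg); linarith [mul_comm de r]
      have hdneg : ga * r < 0 := mul_neg_of_pos_of_neg hga hrneg
      by_cases h1 : -(ga * r) ≤ be
      · have hdm : d ∈ segment ℝ p q := by
          rw [hd'']; exact hsegpq _ (by linarith) (by linarith)
        rcases hpart1 p q d hpq hd2.2 hdm with hdp | hdq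
        · by_cases h2 : -(de * r) ≤ al
          · have hcm : c ∈ segment ℝ p q := by
              rw [hc'']; exact hsegpq _ (by linarith) h2
            rcases hpart1 p q c hpq hc2.2 hcm with hcp | hcq
            · exact absurd (hcp.trans hdp.symm) hcdne
            · rw [hcq, hdp]; exact Set.pair_comm p q
          · have hqm : q ∈ segment ℝ c d := by
              rw [segment_symm, hq', hc'', hd'']
              exact seg_param x e1 (by linarith) (by linarith) (by linarith)
            rcases hpart1 c d q hcd hq1.2 hqm with hqc | hqd
            · exfalso
              have := hinj al (-(de * r)) (by rw [← hq', ← hc'']; exact hqc)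
              linarith
            · exact absurd (hqd.trans hdp) hpqne.symm
        · exfalso
          have := hinj (ga * r) al (by rw [← hd'', ← hq']; exact hdq)
          linarith
      · have hpm : p ∈ segment ℝ c d := by
          rw [segment_symm, hp', hc'', hd'']
          exact seg_param x e1 (by linarith) (by linarith) (by linarith)
        rcases hpart1 c d p hcd hp1.2 hpm with hpc | hpd
        · exfalso
          have := hinj (-be) (-(de * r)) (by rw [← hp', ← hc'']; exact hpc)
          linarith
        · exfalso
          have := hinj (-be) (ga * r) (by rw [← hp', ← hd'']; exact hpd)
          linarith
    · -- r > 0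
      have hcneg : -(de * r) < 0 := by have := mul_pos hde hrpos; linarith
      have hdpos : 0 < ga * r := mul_pos hga hrpos
      by_cases h1 : de * r ≤ be
      · have hcm : c ∈ segment ℝ p q := by
          rw [hc'']; exact hsegpq _ (by linarith) (by linarith)
        rcases hpart1 p q c hpq hc2.2 hcm with hcp | hcq
        · by_cases h2 : ga * r ≤ al
          · have hdm : d ∈ segment ℝ p q := by
              rw [hd'']; exact hsegpq _ (by linarith) h2
            rcases hpart1 p q d hpq hd2.2 hdm with hdp | hdq
            · exact absurd (hcp.trans hdp.symm) hcdne
            · rw [hcp, hdq]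
          · have hqm : q ∈ segment ℝ c d := by
              rw [hq', hc'', hd'']
              exact seg_param x e1 (by linarith) (by linarith) (by linarith)
            rcases hpart1 c d q hcd hq1.2 hqm with hqc | hqd
            · exact absurd (hqc.trans hcp) hpqne.symm
            · exfalso
              have := hinj al (ga * r) (by rw [← hq', ← hd'']; exact hqd)
              linarith
        · exfalso
          have := hinj (-(de * r)) al (by rw [← hc'', ← hq']; exact hcq)
          linarith
      · have hpm : p ∈ segment ℝ c d := by
          rw [hp', hc'', hd'']
          exact seg_param x e1 (by linarith) (by linarith) (by linarith)
        rcases hpart1 c d p hcd hp1.2 hpm with hpc | hpd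
        · exfalso
          have := hinj (-be) (-(de * r)) (by rw [← hp', ← hc'']; exact hpc)
          linarith
        · exfalso
          have := hinj (-be) (ga * r) (by rw [← hp', ← hd'']; exact hpd)
          linarith
  · -- non-collinear case: contradiction
    exfalso
    have hli : LinearIndependent ℝ ![e1, e2] := by
      rw [LinearIndependent.pair_iff]
      intro s t hst
      by_cases ht : t = 0
      · subst ht
        rw [zero_smul, add_zero] at hst
        refine ⟨?_, rfl⟩
        rcases smul_eq_zero.mp hst with h | h
        · exact h
        · exact absurd h he1ne
      · exfalso
        apply hcol
        refine ⟨-s/t, ?_⟩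
        have h5 : t • e2 = (-s) • e1 := by
          rw [neg_smul]; exact eq_neg_of_add_eq_zero_right hst
        calc e2 = t⁻¹ • (t • e2) := (inv_smul_smul₀ ht _).symm
          _ = t⁻¹ • ((-s) • e1) := by rw [h5]
          _ = (-s/t) • e1 := by rw [smul_smul, div_eq_inv_mul]
    have hspan : Submodule.span ℝ ({e1, e2} : Set (EuclideanSpace ℝ (Fin 2))) = ⊤ := by
      have hrg : Set.range ![e1, e2] = {e1, e2} := by
        simp [Matrix.range_cons, Matrix.range_empty, Set.pair_comm]
      apply Submodule.eq_top_of_finrank_eq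
      rw [← hrg, finrank_span_eq_card hli]
      simp [finrank_euclideanSpace]
    set v := t2 - t1 with hvdef
    have hvmem : v ∈ Submodule.span ℝ ({e1, e2} : Set (EuclideanSpace ℝ (Fin 2))) := by
      rw [hspan]; exact Submodule.mem_top
    obtain ⟨a, b, hv⟩ := Submodule.mem_span_pair.mp hvmem
    have hshift21 : ∀ z, z ∈ K2 → z - v ∈ K1 := by
      intro z hz
      rw [hK2def] at hz
      obtain ⟨u, hu, rfl⟩ := hz
      rw [hK1def]
      exact ⟨u, hu, by show u + t1 = u + t2 - v; rw [hvdef]; abel⟩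
    have hshift12 : ∀ z, z ∈ K1 → z + v ∈ K2 := by
      intro z hz
      rw [hK1def] at hz
      obtain ⟨u, hu, rfl⟩ := hz
      rw [hK2def]
      exact ⟨u, hu, by show u + t2 = u + t1 + v; rw [hvdef]; abel⟩
    have hsolve : ∀ s t : ℝ, s ≠ 0 → s • e2 = t • e1 → False := by
      intro s t hs h
      apply hcol
      refine ⟨t/s, ?_⟩
      calc e2 = s⁻¹ • (s • e2) := (inv_smul_smul₀ hs _).symm
        _ = s⁻¹ • (t • e1) := by rw [h]
        _ = (t/s) • e1 := by rw [smul_smul, div_eq_inv_mul]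
    have hdene : (-de : ℝ) ≠ 0 := neg_ne_zero.mpr hde.ne'
    have hFc : c ∈ K1 → False := by
      intro h
      have hmem : c ∈ ({p, q} : Set (EuclideanSpace ℝ (Fin 2))) := by
        rw [← hK1]; exact ⟨h, hc2.2⟩
      rcases (by simpa using hmem : c = p ∨ c = q) with h' | h'
      · exact hsolve (-de) (-be) hdene (add_left_cancel
          (show x + (-de) • e2 = x + (-be) • e1 by rw [← hc', ← hp']; exact h'))
      · exact hsolve (-de) al hdene (add_left_cancel
          (show x + (-de) • e2 = x + al • e1 by rw [← hc', ← hq']; exact h'))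
    have hFd : d ∈ K1 → False := by
      intro h
      have hmem : d ∈ ({p, q} : Set (EuclideanSpace ℝ (Fin 2))) := by
        rw [← hK1]; exact ⟨h, hd2.2⟩
      rcases (by simpa using hmem : d = p ∨ d = q) with h' | h'
      · exact hsolve ga (-be) hga.ne' (add_left_cancel
          (show x + ga • e2 = x + (-be) • e1 by rw [← hd', ← hp']; exact h'))
      · exact hsolve ga al hga.ne' (add_left_cancel
          (show x + ga • e2 = x + al • e1 by rw [← hd', ← hq']; exact h'))
    have hFp : p ∈ K2 → False := by
      intro h
      have hmem : p ∈ ({c, d} : Set (EuclideanSpace ℝ (Fin 2))) := by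
        rw [← hK2]; exact ⟨h, hp1.2⟩
      rcases (by simpa using hmem : p = c ∨ p = d) with h' | h'
      · exact hsolve (-de) (-be) hdene (add_left_cancel
          (show x + (-de) • e2 = x + (-be) • e1 by rw [← hc', ← hp']; exact h'.symm))
      · exact hsolve ga (-be) hga.ne' (add_left_cancel
          (show x + ga • e2 = x + (-be) • e1 by rw [← hd', ← hp']; exact h'.symm))
    have hFq : q ∈ K2 → False := by
      intro h
      have hmem : q ∈ ({c, d} : Set (EuclideanSpace ℝ (Fin 2))) := by
        rw [← hK2]; exact ⟨h, hq1.2⟩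
      rcases (by simpa using hmem : q = c ∨ q = d) with h' | h'
      · exact hsolve (-de) al hdene (add_left_cancel
          (show x + (-de) • e2 = x + al • e1 by rw [← hc', ← hq']; exact h'.symm))
      · exact hsolve ga al hga.ne' (add_left_cancel
          (show x + ga • e2 = x + al • e1 by rw [← hd', ← hq']; exact h'.symm))
    have hcmv : c - v ∈ K1 := hshift21 c hc2.1
    have hdmv : d - v ∈ K1 := hshift21 d hd2.1
    have hppv : p + v ∈ K2 := hshift12 p hp1.1
    have hqpv : q + v ∈ K2 := hshift12 q hq1.1
    have hQ : 0 ≤ ga * a + al * b → 0 ≤ de * a - al * b → 0 < a → False := by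
      intro hn1 hn2 ha
      apply hFq
      exact conv3 (c1 := al) (c2 := ga * a + al * b) (c3 := de * a - al * b) (S := a + al)
        hK2conv hqpv hc2.1 hd2.1 hal0 hn1 hn2 (by linarith)
        (by linear_combination a * hgd)
        (by rw [hq', hc', hd', ← hv, hgade]; module)
    have hPp : 0 ≤ be * b - a * ga → 0 ≤ -(be * b) - a * de → a < 0 → False := by
      intro hn1 hn2 ha
      apply hFp
      exact conv3 (c1 := be) (c2 := be * b - a * ga) (c3 := -(be * b) - a * de) (S := be - a)
        hK2conv hppv hc2.1 hd2.1 hbe0 hn1 hn2 (by linarith)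
        (by linear_combination (-a) * hgd)
        (by rw [hp', hc', hd', ← hv, hgade]; module)
    rcases lt_trichotomy b 0 with hb | hb | hb
    · by_cases h1 : ga * a ≤ -(al * b)
      · by_cases h2 : be * b ≤ ga * a
        · apply hFd
          exact conv3 (c1 := ga) (c2 := -(al * b) - ga * a) (c3 := ga * a - be * b) (S := ga - b)
            hK1conv hdmv hp1.1 hq1.1 hga0 (by linarith) (by linarith) (by linarith)
            (by linear_combination (-b) * hab)
            (by rw [hd', hp', hq', ← hv, halbe]; module)
        · have ha : a < 0 := by
            by_contra hcon
            push_neg at hcon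
            have := mul_nonneg hga0 hcon
            have := mul_neg_of_pos_of_neg hbe hb
            linarith
          exact hPp (by linarith)
            (by linarith [mul_neg_of_pos_of_neg hbe hb, mul_neg_of_neg_of_pos ha hde]) ha
      · have ha : 0 < a := by
          by_contra hcon
          push_neg at hcon
          have h3 := mul_nonpos_of_nonneg_of_nonpos hga0 hcon
          have := mul_neg_of_pos_of_neg hal hb
          linarith
        exact hQ (by linarith [mul_neg_of_pos_of_neg hal hb])
          (by linarith [mul_pos hde ha, mul_neg_of_pos_of_neg hal hb]) ha
    · subst hb
      rcases lt_trichotomy a 0 with ha | ha | ha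
      · exact hPp (by linarith [mul_neg_of_neg_of_pos ha hga])
          (by linarith [mul_neg_of_neg_of_pos ha hde]) ha
      · subst ha
        apply hFc
        have hv0 : v = 0 := by rw [← hv]; simp
        simpa [hv0] using hcmv
      · exact hQ (by linarith [mul_pos hga ha]) (by linarith [mul_pos hde ha]) ha
    · by_cases h1 : a * de ≤ al * b
      · by_cases h2 : -(be * b) ≤ a * de
        · apply hFc
          exact conv3 (c1 := de) (c2 := al * b - a * de) (c3 := a * de + be * b) (S := b + de)
            hK1conv hcmv hp1.1 hq1.1 hde0 (by linarith) (by linarith) (by linarith)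
            (by linear_combination b * hab)
            (by rw [hc', hp', hq', ← hv, halbe]; module)
        · have ha : a < 0 := by
            by_contra hcon
            push_neg at hcon
            have := mul_nonneg hcon hde0
            have := mul_pos hbe hb
            linarith
          exact hPp (by linarith [mul_pos hbe hb, mul_neg_of_neg_of_pos ha hga])
            (by linarith) ha
      · have ha : 0 < a := by
          by_contra hcon
          push_neg at hcon
          have h3 := mul_nonpos_of_nonpos_of_nonneg hcon hde0
          have := mul_pos hal hb
          linarith
        exact hQ (by linarith [mul_pos hga ha, mul_pos hal hb]) (by linarith) ha
end

section
/- Let C ⊆ ℝ² be convex with 0 ∉ C, and α > 1. Suppose a, b ∈ C \ (α·C) and c, d ∈ (α·C) \ C. Then the segments [a,b] and [c,d] do not cross (do not intersect at a point interior to both). -/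
open scoped Pointwise

private lemma cancel_smul {E : Type*} [AddCommGroup E] [Module ℝ E] {α : ℝ}
    (hα : α ≠ 0) (r : ℝ) (v : E) : (r * α) • (α⁻¹ • v) = r • v := by
  rw [smul_smul, mul_assoc, mul_inv_cancel₀ hα, mul_one]

private lemma combo3_mem {E : Type*} [AddCommGroup E] [Module ℝ E] {C : Set E}
    (hC : Convex ℝ C) {x y z w : E} (hx : x ∈ C) (hy : y ∈ C) (hz : z ∈ C)
    {p q r S : ℝ} (hp : 0 ≤ p) (hq : 0 ≤ q) (hr : 0 ≤ r) (hS : 0 < S)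
    (hsum : p + q + r = S) (hw : S • w = p • x + q • y + r • z) : w ∈ C := by
  have hS' : S ≠ 0 := hS.ne'
  have hmem : (p/S) • x + (q/S) • y + (r/S) • z ∈ C := by
    have h := hC.sum_mem (t := Finset.univ) (w := ![p/S, q/S, r/S]) (z := ![x, y, z])
      (fun i _ => by fin_cases i <;> exact div_nonneg (by assumption) hS.le)
      (by simp [Fin.sum_univ_three]; field_simp; linarith)
      (fun i _ => by fin_cases i <;> assumption)
    simpa [Fin.sum_univ_three] using h
  have hww : w = (p/S) • x + (q/S) • y + (r/S) • z := by
    calc w = S⁻¹ • (S • w) := (inv_smul_smul₀ hS' w).symm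
    _ = S⁻¹ • (p • x + q • y + r • z) := by rw [hw]
    _ = (p/S) • x + (q/S) • y + (r/S) • z := by
        match_scalars <;> field_simp <;> ring
  rw [hww]; exact hmem

private lemma key {E : Type*} [AddCommGroup E] [Module ℝ E] {C : Set E}
    (hC : Convex ℝ C) {a b c d x : E} {α s t β γ : ℝ}
    (hα : 1 < α) (hs0 : 0 < s) (hs1 : s < 1) (ht0 : 0 < t) (ht1 : t < 1)
    (hβ : 0 ≤ β) (hγ : 0 ≤ γ)
    (h1 : x = (1-s) • a + s • b) (h2 : x = (1-t) • c + t • d)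
    (h0 : (0 : E) = x + β • (b - a) + γ • (d - c))
    (haC : a ∈ C) (hbC : b ∈ C) (hcC : α⁻¹ • c ∈ C) (hdC : α⁻¹ • d ∈ C) :
    d ∈ C ∨ α⁻¹ • a ∈ C := by
  have hα0 : (0:ℝ) < α := lt_trans one_pos hα
  have hα1 : (0:ℝ) ≤ α - 1 := by linarith
  have h1t : (0:ℝ) < 1 - t := by linarith
  rcases le_or_gt ((1-t)*(s+β)) (s*γ) with hcase | hcase
  · -- d ∈ C
    left
    have hγt : 1 - t ≤ γ := by nlinarith [mul_nonneg h1t.le hβ]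
    have hw : ((α-1)*γ + (1-t)) • d
        = ((α-1) * ((1-s)*(γ-(1-t)) + β*(1-t))) • a
          + ((α-1) * (s*γ - (s+β)*(1-t))) • b
          + ((1-t) * α) • (α⁻¹ • d) := by
      rw [cancel_smul hα0.ne']
      linear_combination (norm := module) (-((α-1)*(1-t))) • h0
        + ((α-1)*(γ-(1-t))) • h1 + (-((α-1)*γ)) • h2
    exact combo3_mem hC haC hbC hdC
      (mul_nonneg hα1 (add_nonneg (mul_nonneg (by linarith) (by linarith))
        (mul_nonneg hβ h1t.le)))
      (mul_nonneg hα1 (by nlinarith))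
      (mul_nonneg h1t.le hα0.le)
      (by nlinarith [mul_nonneg hα1 hγ])
      (by ring) hw
  · -- α⁻¹ • a ∈ C
    right
    have hxC : α⁻¹ • x ∈ C := by
      have hxx : α⁻¹ • x = (1-t) • (α⁻¹ • c) + t • (α⁻¹ • d) := by
        rw [h2]; module
      rw [hxx]; exact hC hcC hdC h1t.le ht0.le (by ring)
    have hD2 : (0:ℝ) < s*α + (α-1)*β := by nlinarith [mul_pos hs0 hα0, mul_nonneg hα1 hβ]
    have hw : (((1-t) * (s*α + (α-1)*β)) * α) • (α⁻¹ • a)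
        = ((1-t)*s*α) • a
          + (((α-1) * ((1-t)*(s+β) - s*γ)) * α) • (α⁻¹ • x)
          + (((α-1)*s*γ) * α) • (α⁻¹ • d) := by
      rw [cancel_smul hα0.ne', cancel_smul hα0.ne', cancel_smul hα0.ne']
      linear_combination (norm := module) ((1-t)*(α-1)*s) • h0
        + (-((1-t)*(α-1)*β)) • h1 + ((α-1)*s*γ) • h2
    exact combo3_mem hC haC hxC hdC
      (by positivity)
      (mul_nonneg (mul_nonneg hα1 (by linarith)) hα0.le)
      (mul_nonneg (mul_nonneg (mul_nonneg hα1 hs0.le) hγ) hα0.le)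
      (by positivity)
      (by ring) hw

set_option maxHeartbeats 2000000 in
theorem stmt_11 (C : Set (EuclideanSpace ℝ (Fin 2))) (hC : Convex ℝ C)
    (h0 : (0 : EuclideanSpace ℝ (Fin 2)) ∉ C)
    (α : ℝ) (hα : 1 < α)
    (a b c d : EuclideanSpace ℝ (Fin 2))
    (ha : a ∈ C \ (α • C)) (hb : b ∈ C \ (α • C))
    (hc : c ∈ (α • C) \ C) (hd : d ∈ (α • C) \ C) :
    ¬ ∃ x, x ∈ segment ℝ a b ∧ x ∈ segment ℝ c d ∧
      x ∉ ({a, b, c, d} : Set (EuclideanSpace ℝ (Fin 2))) := by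
  rintro ⟨x, hxab, hxcd, hxne⟩
  have hα0 : (0:ℝ) < α := lt_trans one_pos hα
  simp only [Set.mem_insert_iff, Set.mem_singleton_iff] at hxne
  push_neg at hxne
  obtain ⟨hxa, hxb, hxc, hxd⟩ := hxne
  -- memberships
  have haC : a ∈ C := ha.1
  have hbC : b ∈ C := hb.1
  have hcC : α⁻¹ • c ∈ C := by
    rw [← Set.mem_smul_set_iff_inv_smul_mem₀ hα0.ne']; exact hc.1
  have hdC : α⁻¹ • d ∈ C := by
    rw [← Set.mem_smul_set_iff_inv_smul_mem₀ hα0.ne']; exact hd.1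
  have hanotin : α⁻¹ • a ∉ C := by
    intro h; exact ha.2 ((Set.mem_smul_set_iff_inv_smul_mem₀ hα0.ne' C a).2 h)
  have hbnotin : α⁻¹ • b ∉ C := by
    intro h; exact hb.2 ((Set.mem_smul_set_iff_inv_smul_mem₀ hα0.ne' C b).2 h)
  -- crossing parameters
  obtain ⟨ua, s, hua, hs, husum, hxs⟩ := hxab
  have h1 : x = (1-s) • a + s • b := by
    rw [← hxs]; have : ua = 1 - s := by linarith
    rw [this]
  have hsne : s ≠ 0 := by
    intro h; apply hxa; rw [h1, h]; simp
  have hsne1 : s ≠ 1 := by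
    intro h; apply hxb; rw [h1, h]; simp
  have hs0 : 0 < s := lt_of_le_of_ne hs (Ne.symm hsne)
  have hs1 : s < 1 := lt_of_le_of_ne (by linarith) hsne1
  obtain ⟨uc, t, huc, ht, htsum, hxt⟩ := hxcd
  have h2 : x = (1-t) • c + t • d := by
    rw [← hxt]; have : uc = 1 - t := by linarith
    rw [this]
  have htne : t ≠ 0 := by
    intro h; apply hxc; rw [h2, h]; simp
  have htne1 : t ≠ 1 := by
    intro h; apply hxd; rw [h2, h]; simp
  have ht0 : 0 < t := lt_of_le_of_ne ht (Ne.symm htne)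
  have ht1 : t < 1 := lt_of_le_of_ne (by linarith) htne1
  have hab : a ≠ b := by
    intro h; apply hxa; rw [h1, h]; module
  have hu0 : b - a ≠ 0 := sub_ne_zero.2 (Ne.symm hab)
  by_cases hcol : ∃ ρ : ℝ, d - c = ρ • (b - a)
  · -- collinear case
    obtain ⟨ρ, hρ⟩ := hcol
    rcases lt_trichotomy ρ 0 with hρn | hρ0 | hρp
    · -- ρ < 0
      rcases le_or_gt (s - t*ρ) 1 with hrc | hrc
      · -- c ∈ C : c = (1-(s-tρ))•a + (s-tρ)•b
        apply hc.2
        have hcc : c = (1-(s-t*ρ)) • a + (s-t*ρ) • b := by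
          linear_combination (norm := module) (1:ℝ) • h1 + (-1:ℝ) • h2 + (-t) • hρ
        rw [hcc]
        exact hC haC hbC (by linarith) (by nlinarith) (by ring)
      · -- b ∈ α⁻¹ stuff : (-ρ)•b = (1-s-(1-t)ρ)•c + (s-tρ-1)•d
        apply hbnotin
        have hw0 : (-ρ) • b = (1-s-(1-t)*ρ) • c + (s-t*ρ-1) • d := by
          linear_combination (norm := module) ρ • h1 + (-ρ) • h2 + (1-s) • hρ
        have hw : ((-ρ) * α) • (α⁻¹ • b)
            = ((1-s-(1-t)*ρ) * α) • (α⁻¹ • c) + ((s-t*ρ-1) * α) • (α⁻¹ • d)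
              + (0:ℝ) • (α⁻¹ • c) := by
          rw [cancel_smul hα0.ne', cancel_smul hα0.ne', cancel_smul hα0.ne', zero_smul,
            add_zero]
          exact hw0
        exact combo3_mem hC hcC hdC hcC
          (mul_nonneg (by nlinarith) hα0.le)
          (mul_nonneg (by linarith) hα0.le)
          le_rfl
          (by nlinarith)
          (by ring) hw
    · -- ρ = 0 : c = d
      apply hxc
      have : d = c := by
        have := hρ; rw [hρ0, zero_smul, sub_eq_zero] at this; exact this
      rw [h2, this]; module
    · -- ρ > 0
      rcases le_or_gt 0 (s - t*ρ) with hrc | hrc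
      · -- c ∈ C
        apply hc.2
        have hcc : c = (1-(s-t*ρ)) • a + (s-t*ρ) • b := by
          linear_combination (norm := module) (1:ℝ) • h1 + (-1:ℝ) • h2 + (-t) • hρ
        rw [hcc]
        exact hC haC hbC (by nlinarith) hrc (by ring)
      · -- a ∈ α C : ρ•a = ((1-t)ρ+s)•c + (tρ-s)•d
        apply hanotin
        have hw0 : ρ • a = ((1-t)*ρ+s) • c + (t*ρ-s) • d := by
          linear_combination (norm := module) (-ρ) • h1 + ρ • h2 + s • hρ
        have hw : (ρ * α) • (α⁻¹ • a)
            = (((1-t)*ρ+s) * α) • (α⁻¹ • c) + ((t*ρ-s) * α) • (α⁻¹ • d)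
              + (0:ℝ) • (α⁻¹ • c) := by
          rw [cancel_smul hα0.ne', cancel_smul hα0.ne', cancel_smul hα0.ne', zero_smul,
            add_zero]
          exact hw0
        exact combo3_mem hC hcC hdC hcC
          (mul_nonneg (by nlinarith) hα0.le)
          (mul_nonneg (by linarith) hα0.le)
          le_rfl
          (by positivity)
          (by ring) hw
  · -- independent case
    have hind : LinearIndependent ℝ ![b - a, d - c] := by
      rw [LinearIndependent.pair_iff]
      intro p q hpq
      by_cases hq : q = 0
      · subst hq
        rw [zero_smul, add_zero, smul_eq_zero] at hpq
        exact ⟨hpq.resolve_right hu0, rfl⟩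
      · exfalso; apply hcol
        refine ⟨-(p/q), ?_⟩
        have : q • (d - c) = (-p) • (b - a) := by
          linear_combination (norm := module) hpq
        have := congrArg (fun y => q⁻¹ • y) this
        simp only [smul_smul, inv_mul_cancel₀ hq, one_smul] at this
        rw [this]; congr 1; field_simp
    have hsp : Submodule.span ℝ (Set.range ![b - a, d - c]) = ⊤ := by
      apply hind.span_eq_top_of_card_eq_finrank
      simp
    have hmem : -x ∈ Submodule.span ℝ ({b - a, d - c} : Set (EuclideanSpace ℝ (Fin 2))) := by
      rw [show ({b - a, d - c} : Set (EuclideanSpace ℝ (Fin 2))) = Set.range ![b - a, d - c] by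
        rw [Set.pair_comm]; simp [Matrix.range_cons, Matrix.range_empty]]
      rw [hsp]; trivial
    obtain ⟨β, γ, hβγ⟩ := Submodule.mem_span_pair.1 hmem
    have h00 : (0 : EuclideanSpace ℝ (Fin 2)) = x + β • (b - a) + γ • (d - c) := by
      linear_combination (norm := module) (-1:ℝ) • hβγ
    rcases le_or_gt 0 β with hβ | hβ <;> rcases le_or_gt 0 γ with hγ | hγ
    · rcases key hC hα hs0 hs1 ht0 ht1 hβ hγ h1 h2 h00 haC hbC hcC hdC with h | h
      · exact hd.2 h
      · exact hanotin h
    · -- γ < 0 : swap c,d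
      have h2' : x = (1-(1-t)) • d + (1-t) • c := by
        linear_combination (norm := module) h2
      have h0' : (0 : EuclideanSpace ℝ (Fin 2)) = x + β • (b - a) + (-γ) • (c - d) := by
        linear_combination (norm := module) h00
      rcases key hC hα hs0 hs1 (by linarith) (by linarith) hβ (by linarith) h1 h2' h0'
          haC hbC hdC hcC with h | h
      · exact hc.2 h
      · exact hanotin h
    · -- β < 0 : swap a,b
      have h1' : x = (1-(1-s)) • b + (1-s) • a := by
        linear_combination (norm := module) h1
      have h0' : (0 : EuclideanSpace ℝ (Fin 2)) = x + (-β) • (a - b) + γ • (d - c) := by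
        linear_combination (norm := module) h00
      rcases key hC hα (by linarith) (by linarith) ht0 ht1 (by linarith) hγ h1' h2 h0'
          hbC haC hcC hdC with h | h
      · exact hd.2 h
      · exact hbnotin h
    · -- both swaps
      have h1' : x = (1-(1-s)) • b + (1-s) • a := by
        linear_combination (norm := module) h1
      have h2' : x = (1-(1-t)) • d + (1-t) • c := by
        linear_combination (norm := module) h2
      have h0' : (0 : EuclideanSpace ℝ (Fin 2)) = x + (-β) • (a - b) + (-γ) • (c - d) := by
        linear_combination (norm := module) h00
      rcases key hC hα (by linarith) (by linarith) (by linarith) (by linarith)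
          (by linarith) (by linarith) h1' h2' h0' hbC haC hdC hcC with h | h
      · exact hc.2 h
      · exact hbnotin h
end

section
/- Let C ⊆ ℝ² be convex, P ⊆ ℝ² finite, and define the generalized Delaunay graph G_st(P,C) on vertex set P with an edge {p,q} whenever there exist α > 0 and t ∈ ℝ² with (α·C + t) ∩ P = {p,q}. Then the straight-line drawing of G_st(P,C) is a plane graph. -/
lemma core_lemma {V : Type*} [AddCommGroup V] [Module ℝ V] {A : Set V} (hA : Convex ℝ A)
    (x U W : V) (a b e f μ σ τ : ℝ)
    (ha : 0 < a) (hb : 0 < b) (he : 0 < e) (hf : 0 < f) (hμ : 0 < μ)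
    (hσ : 0 ≤ σ) (hτ : 0 ≤ τ)
    (h1 : x - a • U ∈ A) (h2 : x + b • U ∈ A)
    (h3 : x + σ • U + (τ - μ * e) • W ∈ A)
    (h4 : x + σ • U + (τ + μ * f) • W ∈ A) :
    x + f • W ∈ A ∨ x + (σ - μ * a) • U + τ • W ∈ A := by
  rcases le_total (f * σ + (1 - μ) * (a * f)) (a * τ) with hcase | hcase
  · left
    have hden : 0 < τ + μ * f := by nlinarith
    have hab : 0 < a + b := by linarith
    set l4 : ℝ := f / (τ + μ * f) with hl4
    have hl4v : l4 * (τ + μ * f) = f := by rw [hl4, div_mul_cancel₀ _ (ne_of_gt hden)]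
    have hl40 : 0 ≤ l4 := by positivity
    have hl41 : l4 ≤ 1 := by rw [hl4, div_le_one hden]; nlinarith
    set l2 : ℝ := ((1 - l4) * a - l4 * σ) / (a + b) with hl2
    set l1 : ℝ := ((1 - l4) * b + l4 * σ) / (a + b) with hl1
    have hl20 : 0 ≤ l2 := by
      apply div_nonneg _ hab.le
      nlinarith [hl4v]
    have hl10 : 0 ≤ l1 := by
      apply div_nonneg _ hab.le
      nlinarith
    have hsum : l1 + l2 + l4 = 1 := by
      rw [hl1, hl2]; field_simp; ring
    have hmem := hA.sum_mem (t := Finset.univ) (w := ![l1, l2, l4])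
      (z := ![x - a • U, x + b • U, x + σ • U + (τ + μ * f) • W])
      (by intro i _; fin_cases i <;> simpa using by assumption)
      (by simp [Fin.sum_univ_three]; linarith)
      (by intro i _; fin_cases i <;> simpa using by assumption)
    rw [Fin.sum_univ_three] at hmem
    simp only [Matrix.cons_val_zero, Matrix.cons_val_one, Matrix.head_cons,
      Matrix.cons_val_two, Matrix.tail_cons] at hmem
    have heq : x + f • W = l1 • (x - a • U) + l2 • (x + b • U) +
        l4 • (x + σ • U + (τ + μ * f) • W) := by
      have hUc : l1 * a = l2 * b + l4 * σ := by
        rw [hl1, hl2]; field_simp; ring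
      match_scalars
      · linarith
      · linarith [hUc]
      · linarith [hl4v]
    rw [heq]; exact hmem
  · right
    have haσ : 0 < a + σ := by linarith
    have hef : 0 < e + f := by linarith
    have hden : 0 < (a + σ) * (e + f) := by positivity
    set l1 : ℝ := μ * a / (a + σ) with hl1
    set l3 : ℝ := ((a + σ - μ * a) * f - a * τ) / ((a + σ) * (e + f)) with hl3
    set l4 : ℝ := ((a + σ - μ * a) * e + a * τ) / ((a + σ) * (e + f)) with hl4
    have hkey : 0 ≤ a + σ - μ * a := by nlinarith
    have hl10 : 0 ≤ l1 := by positivity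
    have hl30 : 0 ≤ l3 := by
      apply div_nonneg _ hden.le
      nlinarith
    have hl40 : 0 ≤ l4 := by
      apply div_nonneg _ hden.le
      nlinarith
    have hsum : l1 + l3 + l4 = 1 := by
      rw [hl1, hl3, hl4]; field_simp; ring
    have hmem := hA.sum_mem (t := Finset.univ) (w := ![l1, l3, l4])
      (z := ![x - a • U, x + σ • U + (τ - μ * e) • W, x + σ • U + (τ + μ * f) • W])
      (by intro i _; fin_cases i <;> simpa using by assumption)
      (by simp [Fin.sum_univ_three]; linarith)
      (by intro i _; fin_cases i <;> simpa using by assumption)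
    rw [Fin.sum_univ_three] at hmem
    simp only [Matrix.cons_val_zero, Matrix.cons_val_one, Matrix.head_cons,
      Matrix.cons_val_two, Matrix.tail_cons] at hmem
    have heq : x + (σ - μ * a) • U + τ • W = l1 • (x - a • U) +
        l3 • (x + σ • U + (τ - μ * e) • W) + l4 • (x + σ • U + (τ + μ * f) • W) := by
      have e1 : σ - μ * a = -(l1 * a) + (l3 + l4) * σ := by
        rw [hl1, hl3, hl4]; field_simp; ring
      have e2 : τ = l3 * (τ - μ * e) + l4 * (τ + μ * f) := by
        rw [hl3, hl4]; field_simp; ring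
      match_scalars
      · linarith
      · linarith [e1]
      · linarith [e2]
    rw [heq]; exact hmem

lemma homothet_convex {C : Set (EuclideanSpace ℝ (Fin 2))} (hC : Convex ℝ C)
    (α : ℝ) (t : EuclideanSpace ℝ (Fin 2)) :
    Convex ℝ ((fun x => α • x + t) '' C) := by
  rintro _ ⟨y, hy, rfl⟩ _ ⟨z, hz, rfl⟩ a b ha hb hab
  refine ⟨a • y + b • z, hC hy hz ha hb hab, ?_⟩
  show α • (a • y + b • z) + t = a • (α • y + t) + b • (α • z + t)
  match_scalars <;> first | ring1 | linear_combination -hab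

lemma shared_lemma {D1 D2 : Set (EuclideanSpace ℝ (Fin 2))}
    (hD1 : Convex ℝ D1) (hD2 : Convex ℝ D2) {w q d x : EuclideanSpace ℝ (Fin 2)}
    (hwD1 : w ∈ D1) (hqD1 : q ∈ D1) (hwD2 : w ∈ D2) (hdD2 : d ∈ D2)
    (hdD1 : d ∉ D1) (hqD2 : q ∉ D2)
    (hx1 : x ∈ segment ℝ w q) (hx2 : x ∈ segment ℝ w d) (hxw : x ≠ w) : False := by
  obtain ⟨a1, b1, ha1, hb1, hab1, hxe1⟩ := hx1
  obtain ⟨a2, b2, ha2, hb2, hab2, hxe2⟩ := hx2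
  have hb1p : 0 < b1 := by
    rcases hb1.lt_or_eq with h | h
    · exact h
    · exfalso; apply hxw; rw [← hxe1, ← h, (by linarith : a1 = 1)]; simp
  have hb2p : 0 < b2 := by
    rcases hb2.lt_or_eq with h | h
    · exact h
    · exfalso; apply hxw; rw [← hxe2, ← h, (by linarith : a2 = 1)]; simp
  have hE1 : x - w = b1 • (q - w) := by
    rw [← hxe1, (by linarith : a1 = 1 - b1)]; module
  have hE2 : x - w = b2 • (d - w) := by
    rw [← hxe2, (by linarith : a2 = 1 - b2)]; module
  have hE : b1 • (q - w) = b2 • (d - w) := hE1.symm.trans hE2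
  rcases le_or_gt b2 b1 with hcmp | hcmp
  · apply hqD2
    have hmem := hD2 hwD2 hdD2 (a := 1 - b2/b1) (b := b2/b1)
      (by rw [sub_nonneg, div_le_one hb1p]; exact hcmp) (by positivity) (by ring)
    rwa [show (1 - b2/b1) • w + (b2/b1) • d = q by
      linear_combination (norm := match_scalars <;> (field_simp; try ring)) (-b1⁻¹ : ℝ) • hE] at hmem
  · apply hdD1
    have hmem := hD1 hwD1 hqD1 (a := 1 - b1/b2) (b := b1/b2)
      (by rw [sub_nonneg, div_le_one hb2p]; linarith) (by positivity) (by ring)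
    rwa [show (1 - b1/b2) • w + (b1/b2) • q = d by
      linear_combination (norm := match_scalars <;> (field_simp; try ring)) (b2⁻¹ : ℝ) • hE] at hmem

set_option maxHeartbeats 1000000 in
lemma main_lemma {A : Set (EuclideanSpace ℝ (Fin 2))} (hA : Convex ℝ A) (μ : ℝ) (hμ : 0 < μ)
    (v p q c d x : EuclideanSpace ℝ (Fin 2)) (hpq : p ≠ q) (hcd : c ≠ d)
    (hp : p ∈ A) (hq : q ∈ A) (hgc : μ • c + v ∈ A) (hgd : μ • d + v ∈ A)
    (hc : c ∉ A) (hd : d ∉ A) (hgp : μ • p + v ∉ A) (hgq : μ • q + v ∉ A)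
    {s r : ℝ} (hs0 : 0 < s) (hs1 : s < 1) (hr0 : 0 < r) (hr1 : r < 1)
    (hx1 : x = (1-s) • p + s • q) (hx2 : x = (1-r) • c + r • d) : False := by
  set U := q - p with hUdef
  set W := d - c with hWdef
  have hU : U ≠ 0 := sub_ne_zero.2 hpq.symm
  have hW : W ≠ 0 := sub_ne_zero.2 hcd.symm
  have hpx : x - s • U = p := by rw [hUdef, hx1]; module
  have hqx : x + (1-s) • U = q := by rw [hUdef, hx1]; module
  have hcx : x - r • W = c := by rw [hWdef, hx2]; module
  have hdx : x + (1-r) • W = d := by rw [hWdef, hx2]; module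
  have hxA : x ∈ A := by
    rw [hx1]; exact hA hp hq (by linarith) hs0.le (by ring)
  have hgxA : μ • x + v ∈ A := by
    have h := hA hgc hgd (by linarith : (0:ℝ) ≤ 1 - r) hr0.le (by ring)
    have heq : μ • x + v = (1-r) • (μ • c + v) + r • (μ • d + v) := by rw [hx2]; module
    rwa [heq]
  by_cases hLI : LinearIndependent ℝ ![U, W]
  · -- independent case
    have hcard : Fintype.card (Fin 2) = Module.finrank ℝ (EuclideanSpace ℝ (Fin 2)) := by
      simp [finrank_euclideanSpace_fin]
    set B := basisOfLinearIndependentOfCardEqFinrank hLI hcard with hBdef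
    have hB : ⇑B = ![U, W] := coe_basisOfLinearIndependentOfCardEqFinrank hLI hcard
    obtain ⟨σ0, τ0, hV0⟩ : ∃ a b : ℝ, a • U + b • W = μ • x + v - x := by
      refine ⟨B.repr (μ • x + v - x) 0, B.repr (μ • x + v - x) 1, ?_⟩
      have h := B.sum_repr (μ • x + v - x)
      rw [Fin.sum_univ_two] at h
      rw [show U = B 0 by rw [hB]; simp, show W = B 1 by rw [hB]; simp]
      exact h
    have hv : v = σ0 • U + τ0 • W - μ • x + x := by rw [hV0]; module
    have hp2 : x - s • U ∈ A := by rwa [hpx]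
    have hq2 : x + (1-s) • U ∈ A := by rwa [hqx]
    rcases le_or_gt 0 σ0 with hσs | hσs <;> rcases le_or_gt 0 τ0 with hτs | hτs
    · rcases core_lemma hA x U W s (1-s) r (1-r) μ σ0 τ0 hs0 (by linarith) hr0
        (by linarith) hμ hσs hτs hp2 hq2
        (by rwa [show x + σ0 • U + (τ0 - μ * r) • W = μ • c + v by
          rw [hv, ← hcx]; module])
        (by rwa [show x + σ0 • U + (τ0 + μ * (1-r)) • W = μ • d + v by
          rw [hv, ← hdx]; module]) with h | h
      · exact hd (by rwa [hdx] at h)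
      · exact hgp (by rwa [show x + (σ0 - μ * s) • U + τ0 • W = μ • p + v by
          rw [hv, ← hpx]; module] at h)
    · rcases core_lemma hA x U (-W) s (1-s) (1-r) r μ σ0 (-τ0) hs0 (by linarith)
        (by linarith) hr0 hμ hσs (by linarith) hp2 hq2
        (by rwa [show x + σ0 • U + (-τ0 - μ * (1-r)) • (-W) = μ • d + v by
          rw [hv, ← hdx]; module])
        (by rwa [show x + σ0 • U + (-τ0 + μ * r) • (-W) = μ • c + v by
          rw [hv, ← hcx]; module]) with h | h
      · exact hc (by rwa [show x + r • (-W) = c by rw [← hcx]; module] at h)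
      · exact hgp (by rwa [show x + (σ0 - μ * s) • U + (-τ0) • (-W) = μ • p + v by
          rw [hv, ← hpx]; module] at h)
    · rcases core_lemma hA x (-U) W (1-s) s r (1-r) μ (-σ0) τ0 (by linarith) hs0 hr0
        (by linarith) hμ (by linarith) hτs
        (by rwa [show x - (1-s) • (-U) = x + (1-s) • U by module])
        (by rwa [show x + s • (-U) = x - s • U by module])
        (by rwa [show x + (-σ0) • (-U) + (τ0 - μ * r) • W = μ • c + v by
          rw [hv, ← hcx]; module])
        (by rwa [show x + (-σ0) • (-U) + (τ0 + μ * (1-r)) • W = μ • d + v by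
          rw [hv, ← hdx]; module]) with h | h
      · exact hd (by rwa [hdx] at h)
      · exact hgq (by rwa [show x + (-σ0 - μ * (1-s)) • (-U) + τ0 • W = μ • q + v by
          rw [hv, ← hqx]; module] at h)
    · rcases core_lemma hA x (-U) (-W) (1-s) s (1-r) r μ (-σ0) (-τ0) (by linarith) hs0
        (by linarith) hr0 hμ (by linarith) (by linarith)
        (by rwa [show x - (1-s) • (-U) = x + (1-s) • U by module])
        (by rwa [show x + s • (-U) = x - s • U by module])
        (by rwa [show x + (-σ0) • (-U) + (-τ0 - μ * (1-r)) • (-W) = μ • d + v by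
          rw [hv, ← hdx]; module])
        (by rwa [show x + (-σ0) • (-U) + (-τ0 + μ * r) • (-W) = μ • c + v by
          rw [hv, ← hcx]; module]) with h | h
      · exact hc (by rwa [show x + r • (-W) = c by rw [← hcx]; module] at h)
      · exact hgq (by rwa [show x + (-σ0 - μ * (1-s)) • (-U) + (-τ0) • (-W) = μ • q + v by
          rw [hv, ← hqx]; module] at h)
  · -- collinear case
    rw [linearIndependent_fin2] at hLI
    push_neg at hLI
    simp only [Matrix.cons_val_one, Matrix.head_cons, Matrix.cons_val_zero] at hLI
    obtain ⟨γ, hγ⟩ := hLI hW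
    have h1s : (1:ℝ) - s ≠ 0 := ne_of_gt (by linarith)
    rcases lt_trichotomy γ 0 with hγ0 | hγ0 | hγ0
    · -- γ < 0
      have hρ0 : 0 < (1-s) * -γ := mul_pos (by linarith) (by linarith)
      rcases le_or_gt r ((1-s) * -γ) with hcmp | hcmp
      · set θ := r / ((1-s) * -γ) with hθdef
        have hθρ : θ * ((1-s) * -γ) = r := div_mul_cancel₀ _ (ne_of_gt hρ0)
        have hθ1 : (0:ℝ) ≤ θ := div_nonneg hr0.le hρ0.le
        have hθ2 : θ ≤ 1 := by rw [hθdef, div_le_one hρ0]; linarith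
        have hmem := hA hq hxA (a := θ) (b := 1 - θ) hθ1 (by linarith) (by ring)
        apply hc
        have heq : θ • q + (1 - θ) • x = c := by
          rw [← hqx, ← hcx, ← hγ]
          match_scalars
          all_goals first | ring1 | linear_combination hθρ | linear_combination -hθρ | linear_combination μ * hθρ | linear_combination -(μ * hθρ)
        rwa [heq] at hmem
      · set θ := ((1-s) * -γ) / r with hθdef
        have hθρ : θ * r = (1-s) * -γ := div_mul_cancel₀ _ (ne_of_gt hr0)
        have hθ1 : (0:ℝ) ≤ θ := div_nonneg hρ0.le hr0.le
        have hθ2 : θ ≤ 1 := by rw [hθdef, div_le_one hr0]; linarith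
        have hmem := hA hgc hgxA (a := θ) (b := 1 - θ) hθ1 (by linarith) (by ring)
        apply hgq
        have heq : θ • (μ • c + v) + (1 - θ) • (μ • x + v) = μ • q + v := by
          rw [← hqx, ← hcx, ← hγ]
          match_scalars
          all_goals first | ring1 | linear_combination hθρ | linear_combination -hθρ | linear_combination μ * hθρ | linear_combination -(μ * hθρ)
        rwa [heq] at hmem
    · exact hU (by rw [← hγ, hγ0, zero_smul])
    · -- γ > 0
      have hsγ : 0 < s * γ := mul_pos hs0 hγ0
      rcases le_or_gt r (s * γ) with hcmp | hcmp
      · set θ := r / (s * γ) with hθdef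
        have hθρ : θ * (s * γ) = r := div_mul_cancel₀ _ (ne_of_gt hsγ)
        have hθ1 : (0:ℝ) ≤ θ := div_nonneg hr0.le hsγ.le
        have hθ2 : θ ≤ 1 := by rw [hθdef, div_le_one hsγ]; linarith
        have hmem := hA hp hxA (a := θ) (b := 1 - θ) hθ1 (by linarith) (by ring)
        apply hc
        have heq : θ • p + (1 - θ) • x = c := by
          rw [← hpx, ← hcx, ← hγ]
          match_scalars
          all_goals first | ring1 | linear_combination hθρ | linear_combination -hθρ | linear_combination μ * hθρ | linear_combination -(μ * hθρ)
        rwa [heq] at hmem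
      · set θ := (s * γ) / r with hθdef
        have hθρ : θ * r = s * γ := div_mul_cancel₀ _ (ne_of_gt hr0)
        have hθ1 : (0:ℝ) ≤ θ := div_nonneg hsγ.le hr0.le
        have hθ2 : θ ≤ 1 := by rw [hθdef, div_le_one hr0]; linarith
        have hmem := hA hgc hgxA (a := θ) (b := 1 - θ) hθ1 (by linarith) (by ring)
        apply hgp
        have heq : θ • (μ • c + v) + (1 - θ) • (μ • x + v) = μ • p + v := by
          rw [← hpx, ← hcx, ← hγ]
          match_scalars
          all_goals first | ring1 | linear_combination hθρ | linear_combination -hθρ | linear_combination μ * hθρ | linear_combination -(μ * hθρ)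
        rwa [heq] at hmem

theorem stmt_12 (C : Set (EuclideanSpace ℝ (Fin 2))) (hC : Convex ℝ C)
    (P : Set (EuclideanSpace ℝ (Fin 2))) (hP : P.Finite)
    (Edge : EuclideanSpace ℝ (Fin 2) → EuclideanSpace ℝ (Fin 2) → Prop)
    (hEdge : ∀ p q, Edge p q ↔ p ≠ q ∧
      ∃ α : ℝ, 0 < α ∧ ∃ t : EuclideanSpace ℝ (Fin 2),
        ((fun x => α • x + t) '' C) ∩ P = {p, q}) :
    (∀ p q v, Edge p q → v ∈ P → v ∈ segment ℝ p q → v = p ∨ v = q) ∧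
    (∀ p q c d, Edge p q → Edge c d →
      ∀ x, x ∈ segment ℝ p q → x ∈ segment ℝ c d →
        ({p, q} : Set (EuclideanSpace ℝ (Fin 2))) = {c, d} ∨
        (x ∈ ({p, q} : Set (EuclideanSpace ℝ (Fin 2))) ∧
         x ∈ ({c, d} : Set (EuclideanSpace ℝ (Fin 2))))) := by
  have part1 : ∀ p q v, Edge p q → v ∈ P → v ∈ segment ℝ p q → v = p ∨ v = q := by
    intro p q vtx hE hvP hseg
    obtain ⟨hne, α, hα, t, hD⟩ := (hEdge p q).1 hE
    have hDc := homothet_convex hC α t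
    have hpD : p ∈ (fun x => α • x + t) '' C := by
      have hm : p ∈ ((fun x => α • x + t) '' C) ∩ P := by rw [hD]; simp
      exact hm.1
    have hqD : q ∈ (fun x => α • x + t) '' C := by
      have hm : q ∈ ((fun x => α • x + t) '' C) ∩ P := by rw [hD]; simp
      exact hm.1
    have hv : vtx ∈ ((fun x => α • x + t) '' C) ∩ P :=
      ⟨hDc.segment_subset hpD hqD hseg, hvP⟩
    rw [hD] at hv
    simpa using hv
  refine ⟨part1, ?_⟩
  intro p q c d hE1 hE2 x hx1 hx2
  obtain ⟨hpq, α1, hα1, t1, hD1⟩ := (hEdge p q).1 hE1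
  obtain ⟨hcd, α2, hα2, t2, hD2⟩ := (hEdge c d).1 hE2
  set D1 : Set (EuclideanSpace ℝ (Fin 2)) := (fun x => α1 • x + t1) '' C with hD1def
  set D2 : Set (EuclideanSpace ℝ (Fin 2)) := (fun x => α2 • x + t2) '' C with hD2def
  have hD1c : Convex ℝ D1 := homothet_convex hC α1 t1
  have hD2c : Convex ℝ D2 := homothet_convex hC α2 t2
  have hpD1 : p ∈ D1 := by have hm : p ∈ D1 ∩ P := by rw [hD1]; simp
                           exact hm.1
  have hqD1 : q ∈ D1 := by have hm : q ∈ D1 ∩ P := by rw [hD1]; simp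
                           exact hm.1
  have hcD2 : c ∈ D2 := by have hm : c ∈ D2 ∩ P := by rw [hD2]; simp
                           exact hm.1
  have hdD2 : d ∈ D2 := by have hm : d ∈ D2 ∩ P := by rw [hD2]; simp
                           exact hm.1
  have hpP : p ∈ P := by have hm : p ∈ D1 ∩ P := by rw [hD1]; simp
                         exact hm.2
  have hqP : q ∈ P := by have hm : q ∈ D1 ∩ P := by rw [hD1]; simp
                         exact hm.2
  have hcP : c ∈ P := by have hm : c ∈ D2 ∩ P := by rw [hD2]; simp
                         exact hm.2
  have hdP : d ∈ P := by have hm : d ∈ D2 ∩ P := by rw [hD2]; simp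
                         exact hm.2
  have hmemD1 : ∀ y, y ∈ P → y ∈ D1 → y = p ∨ y = q := by
    intro y hyP hyD
    have : y ∈ ({p, q} : Set (EuclideanSpace ℝ (Fin 2))) := by rw [← hD1]; exact ⟨hyD, hyP⟩
    simpa using this
  have hmemD2 : ∀ y, y ∈ P → y ∈ D2 → y = c ∨ y = d := by
    intro y hyP hyD
    have : y ∈ ({c, d} : Set (EuclideanSpace ℝ (Fin 2))) := by rw [← hD2]; exact ⟨hyD, hyP⟩
    simpa using this
  have hxD1 : x ∈ D1 := hD1c.segment_subset hpD1 hqD1 hx1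
  have hxD2 : x ∈ D2 := hD2c.segment_subset hcD2 hdD2 hx2
  by_contra hcon
  push_neg at hcon
  obtain ⟨hsets, hxor⟩ := hcon
  have hxp : x ≠ p := by
    intro h
    rcases hmemD2 p hpP (h ▸ hxD2) with h2 | h2 <;>
      exact hxor (by simp [h]) (by simp [h, h2])
  have hxq : x ≠ q := by
    intro h
    rcases hmemD2 q hqP (h ▸ hxD2) with h2 | h2 <;>
      exact hxor (by simp [h]) (by simp [h, h2])
  have hxc : x ≠ c := by
    intro h
    rcases hmemD1 c hcP (h ▸ hxD1) with h2 | h2 <;>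
      exact hxor (by simp [h, h2]) (by simp [h])
  have hxd : x ≠ d := by
    intro h
    rcases hmemD1 d hdP (h ▸ hxD1) with h2 | h2 <;>
      exact hxor (by simp [h, h2]) (by simp [h])
  -- shared-vertex cases
  by_cases hcD1 : c ∈ D1
  · rcases hmemD1 c hcP hcD1 with h | h
    · -- c = p
      have hdD1 : d ∉ D1 := by
        intro hdm
        rcases hmemD1 d hdP hdm with h2 | h2
        · exact hcd (h.trans h2.symm)
        · exact hsets (by rw [h, h2])
      have hqD2' : q ∉ D2 := by
        intro hqm
        rcases hmemD2 q hqP hqm with h2 | h2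
        · exact hpq (h2.trans h).symm
        · exact hsets (by rw [h, ← h2])
      exact shared_lemma hD1c hD2c hpD1 hqD1 (h ▸ hcD2) hdD2 hdD1 hqD2' hx1
        (by rwa [h] at hx2) hxp
    · -- c = q
      have hdD1 : d ∉ D1 := by
        intro hdm
        rcases hmemD1 d hdP hdm with h2 | h2
        · exact hsets (by rw [h, h2, Set.pair_comm])
        · exact hcd (h.trans h2.symm)
      have hpD2' : p ∉ D2 := by
        intro hpm
        rcases hmemD2 p hpP hpm with h2 | h2
        · exact hpq (h2.trans h)
        · exact hsets (by rw [h, ← h2, Set.pair_comm])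
      exact shared_lemma hD1c hD2c hqD1 hpD1 (h ▸ hcD2) hdD2 hdD1 hpD2'
        (by rwa [segment_symm] at hx1) (by rwa [h] at hx2) hxq
  · by_cases hdD1 : d ∈ D1
    · rcases hmemD1 d hdP hdD1 with h | h
      · -- d = p
        have hqD2' : q ∉ D2 := by
          intro hqm
          rcases hmemD2 q hqP hqm with h2 | h2
          · exact hsets (by rw [h, ← h2, Set.pair_comm])
          · exact hpq (h2.trans h).symm
        exact shared_lemma hD1c hD2c hpD1 hqD1 (h ▸ hdD2) hcD2 hcD1 hqD2' hx1
          (by rw [segment_symm] at hx2; rwa [h] at hx2) hxp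
      · -- d = q
        have hpD2' : p ∉ D2 := by
          intro hpm
          rcases hmemD2 p hpP hpm with h2 | h2
          · exact hsets (by rw [h, ← h2])
          · exact hpq (h2.trans h)
        exact shared_lemma hD1c hD2c hqD1 hpD1 (h ▸ hdD2) hcD2 hcD1 hpD2'
          (by rwa [segment_symm] at hx1) (by rw [segment_symm] at hx2; rwa [h] at hx2) hxq
    · -- c, d ∉ D1; derive p, q ∉ D2 and apply main_lemma
      have hpD2' : p ∉ D2 := by
        intro hpm
        rcases hmemD2 p hpP hpm with h2 | h2
        · exact hcD1 (h2 ▸ hpD1)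
        · exact hdD1 (h2 ▸ hpD1)
      have hqD2' : q ∉ D2 := by
        intro hqm
        rcases hmemD2 q hqP hqm with h2 | h2
        · exact hcD1 (h2 ▸ hqD1)
        · exact hdD1 (h2 ▸ hqD1)
      obtain ⟨a1, b1, ha1, hb1, hab1, hxe1⟩ := hx1
      obtain ⟨a2, b2, ha2, hb2, hab2, hxe2⟩ := hx2
      have hb1p : 0 < b1 := by
        rcases hb1.lt_or_eq with h | h
        · exact h
        · exact absurd (by rw [← hxe1, ← h, (by linarith : a1 = 1)]; simp) hxp
      have hb1l : b1 < 1 := by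
        rcases (by linarith : b1 ≤ 1).lt_or_eq with h | h
        · exact h
        · exact absurd (by rw [← hxe1, h, (by linarith : a1 = 0)]; simp) hxq
      have hb2p : 0 < b2 := by
        rcases hb2.lt_or_eq with h | h
        · exact h
        · exact absurd (by rw [← hxe2, ← h, (by linarith : a2 = 1)]; simp) hxc
      have hb2l : b2 < 1 := by
        rcases (by linarith : b2 ≤ 1).lt_or_eq with h | h
        · exact h
        · exact absurd (by rw [← hxe2, h, (by linarith : a2 = 0)]; simp) hxd
      have hiff : ∀ y, y ∈ D2 ↔ (α1/α2) • y + (t1 - (α1/α2) • t2) ∈ D1 := by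
        intro y
        constructor
        · rintro ⟨z, hz, rfl⟩
          refine ⟨z, hz, ?_⟩
          show α1 • z + t1 = (α1/α2) • (α2 • z + t2) + (t1 - (α1/α2) • t2)
          match_scalars <;> (field_simp; try ring)
        · rintro ⟨z, hz, he⟩
          refine ⟨z, hz, ?_⟩
          show α2 • z + t2 = y
          have he' : α1 • z + t1 = (α1/α2) • y + (t1 - (α1/α2) • t2) := he
          linear_combination (norm := match_scalars <;> (field_simp; try ring)) (α2/α1 : ℝ) • he'
      exact main_lemma hD1c (α1/α2) (by positivity) (t1 - (α1/α2) • t2) p q c d x hpq hcd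
        hpD1 hqD1 ((hiff c).1 hcD2) ((hiff d).1 hdD2) hcD1 hdD1
        (fun h => hpD2' ((hiff p).2 h)) (fun h => hqD2' ((hiff q).2 h))
        hb1p hb1l hb2p hb2l
        (by rw [← hxe1, (by linarith : a1 = 1 - b1)])
        (by rw [← hxe2, (by linarith : a2 = 1 - b2)])
end

section
/- Let t ∈ ℝ² be nonzero and let C₁ ⊆ ℝ² be convex, C₂ = C₁ + t. Suppose a, b ∈ C₁ \ C₂ and c, d ∈ C₂ \ C₁, and suppose the segments [a,b] and [c,d] cross at an interior point x. Then among {a,b,c,d}, choosing ℓ and h of minimum and maximum coordinate in the direction orthogonal to t leads to a contradiction; in particular no such crossing configuration exists even in the degenerate case where {ℓ,h} = {a,c} or {ℓ,h} shares one point from each segment. -/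
private lemma lune_lt (C₁ : Set (EuclideanSpace ℝ (Fin 2))) (hC : Convex ℝ C₁)
    (t : EuclideanSpace ℝ (Fin 2)) (hT : 0 < t 0 ^ 2 + t 1 ^ 2)
    (z p : EuclideanSpace ℝ (Fin 2)) (hz : ∃ w ∈ C₁, w + t = z) (hz' : z ∉ C₁)
    (hp : p ∈ C₁) (hf : t 1 * p 0 - t 0 * p 1 = t 1 * z 0 - t 0 * z 1) :
    t 0 * p 0 + t 1 * p 1 < t 0 * z 0 + t 1 * z 1 := by
  by_contra hle
  push_neg at hle
  obtain ⟨w, hw, rfl⟩ := hz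
  have hw0 : (w + t) 0 = w 0 + t 0 := rfl
  have hw1 : (w + t) 1 = w 1 + t 1 := rfl
  rw [hw0, hw1] at hf hle
  set T : ℝ := t 0 ^ 2 + t 1 ^ 2 with hTdef
  set G : ℝ := t 0 * (p 0 - w 0) + t 1 * (p 1 - w 1) with hGdef
  have hf' : t 1 * (p 0 - w 0) - t 0 * (p 1 - w 1) = 0 := by linear_combination hf
  have hGT : T ≤ G := by simp only [hGdef, hTdef]; nlinarith [hle]
  have hG : 0 < G := lt_of_lt_of_le hT hGT
  set μ : ℝ := T / G with hμ
  have hμ0 : 0 ≤ μ := le_of_lt (div_pos hT hG)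
  have hμ1 : μ ≤ 1 := (div_le_one hG).2 hGT
  have key0 : μ * (p 0 - w 0) = t 0 := by
    rw [hμ, div_mul_eq_mul_div, div_eq_iff hG.ne']
    linear_combination t 1 * hf'
  have key1 : μ * (p 1 - w 1) = t 1 := by
    rw [hμ, div_mul_eq_mul_div, div_eq_iff hG.ne']
    linear_combination (- t 0) * hf'
  have hmem : (1 - μ) • w + μ • p ∈ C₁ := hC hw hp (by linarith) hμ0 (by ring)
  have heq : (1 - μ) • w + μ • p = w + t := by
    ext i
    have : ((1 - μ) • w + μ • p) i = (1 - μ) * w i + μ * p i := by simp [smul_eq_mul]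
    rw [this]
    fin_cases i
    · show (1 - μ) * w 0 + μ * p 0 = w 0 + t 0
      linear_combination key0
    · show (1 - μ) * w 1 + μ * p 1 = w 1 + t 1
      linear_combination key1
  exact hz' (heq ▸ hmem)

private lemma lune_gt (C₁ : Set (EuclideanSpace ℝ (Fin 2))) (hC : Convex ℝ C₁)
    (t : EuclideanSpace ℝ (Fin 2)) (hT : 0 < t 0 ^ 2 + t 1 ^ 2)
    (z q : EuclideanSpace ℝ (Fin 2)) (hz : z ∈ C₁) (hz' : ¬ ∃ w ∈ C₁, w + t = z)
    (hq : ∃ v ∈ C₁, v + t = q) (hf : t 1 * q 0 - t 0 * q 1 = t 1 * z 0 - t 0 * z 1) :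
    t 0 * z 0 + t 1 * z 1 < t 0 * q 0 + t 1 * q 1 := by
  by_contra hle
  push_neg at hle
  obtain ⟨v, hv, rfl⟩ := hq
  have hv0 : (v + t) 0 = v 0 + t 0 := rfl
  have hv1 : (v + t) 1 = v 1 + t 1 := rfl
  rw [hv0, hv1] at hf hle
  set T : ℝ := t 0 ^ 2 + t 1 ^ 2 with hTdef
  set G : ℝ := t 0 * (z 0 - v 0) + t 1 * (z 1 - v 1) with hGdef
  have hf' : t 1 * (z 0 - v 0) - t 0 * (z 1 - v 1) = 0 := by linear_combination - hf
  have hGT : T ≤ G := by simp only [hGdef, hTdef]; nlinarith [hle]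
  have hG : 0 < G := lt_of_lt_of_le hT hGT
  set ν : ℝ := (G - T) / G with hν
  have hν0 : 0 ≤ ν := div_nonneg (by linarith) hG.le
  have hν1 : ν ≤ 1 := (div_le_one hG).2 (by linarith)
  have key0 : (1 - ν) * (z 0 - v 0) = t 0 := by
    have h1ν : (1 - ν) = T / G := by rw [hν]; field_simp; ring
    rw [h1ν, div_mul_eq_mul_div, div_eq_iff hG.ne']
    linear_combination t 1 * hf'
  have key1 : (1 - ν) * (z 1 - v 1) = t 1 := by
    have h1ν : (1 - ν) = T / G := by rw [hν]; field_simp; ring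
    rw [h1ν, div_mul_eq_mul_div, div_eq_iff hG.ne']
    linear_combination (- t 0) * hf'
  have hmem : (1 - ν) • v + ν • z ∈ C₁ := hC hv hz (by linarith) hν0 (by ring)
  apply hz'
  refine ⟨(1 - ν) • v + ν • z, hmem, ?_⟩
  ext i
  have : ((1 - ν) • v + ν • z + t) i = ((1 - ν) * v i + ν * z i) + t i := by simp [smul_eq_mul]
  rw [this]
  fin_cases i
  · show (1 - ν) * v 0 + ν * z 0 + t 0 = z 0
    linear_combination - key0
  · show (1 - ν) * v 1 + ν * z 1 + t 1 = z 1
    linear_combination - key1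

private lemma seg_param_s15 {α β y : ℝ} (h1 : α ≤ y) (h2 : y ≤ β) (hne : α < β) :
    ∃ σ, 0 ≤ σ ∧ σ ≤ 1 ∧ (1 - σ) * α + σ * β = y := by
  have hd : β - α ≠ 0 := sub_ne_zero.2 (ne_of_gt hne)
  refine ⟨(y - α) / (β - α), div_nonneg (by linarith) (by linarith),
    (div_le_one (by linarith)).2 (by linarith), ?_⟩
  field_simp
  ring

private lemma key' (α β γ δ A B C D fx gx l μ : ℝ)
    (hl0 : 0 ≤ l) (hl1 : l ≤ 1) (hμ0 : 0 ≤ μ) (hμ1 : μ ≤ 1)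
    (hf1 : (1 - l) * α + l * β = fx) (hg1 : (1 - l) * A + l * B = gx)
    (hf2 : (1 - μ) * γ + μ * δ = fx) (hg2 : (1 - μ) * C + μ * D = gx)
    (hαβ : α ≤ β) (hγδ : γ ≤ δ)
    (H1 : ∀ σ, 0 ≤ σ → σ ≤ 1 → (1 - σ) * α + σ * β = γ → (1 - σ) * A + σ * B < C)
    (H2 : ∀ σ, 0 ≤ σ → σ ≤ 1 → (1 - σ) * α + σ * β = δ → (1 - σ) * A + σ * B < D)
    (H3 : ∀ τ, 0 ≤ τ → τ ≤ 1 → (1 - τ) * γ + τ * δ = α → A < (1 - τ) * C + τ * D)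
    (H4 : ∀ τ, 0 ≤ τ → τ ≤ 1 → (1 - τ) * γ + τ * δ = β → B < (1 - τ) * C + τ * D) :
    False := by
  have hαfx : α ≤ fx := by nlinarith
  have hfxβ : fx ≤ β := by nlinarith
  have hγfx : γ ≤ fx := by nlinarith
  have hfxδ : fx ≤ δ := by nlinarith
  rcases eq_or_lt_of_le hαβ with hab | hab
  · have hA : A < gx := by
      have := H3 μ hμ0 hμ1 (by linarith)
      linarith [hg2 ▸ this]
    have hB : B < gx := by
      have := H4 μ hμ0 hμ1 (by linarith)
      linarith [hg2 ▸ this]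
    nlinarith [mul_nonneg hl0 (sub_nonneg.2 hB.le), mul_nonneg (by linarith : (0:ℝ) ≤ 1 - l) (sub_nonneg.2 hA.le)]
  rcases eq_or_lt_of_le hγδ with hcd | hcd
  · have hCx : gx < C := by
      have := H1 l hl0 hl1 (by linarith)
      linarith [hg1 ▸ this]
    have hDx : gx < D := by
      have := H2 l hl0 hl1 (by linarith)
      linarith [hg1 ▸ this]
    nlinarith [mul_nonneg hμ0 (sub_nonneg.2 hDx.le), mul_nonneg (by linarith : (0:ℝ) ≤ 1 - μ) (sub_nonneg.2 hCx.le)]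
  -- main case: α < β, γ < δ
  have hdab : β - α ≠ 0 := sub_ne_zero.2 (ne_of_gt hab)
  have hdcd : δ - γ ≠ 0 := sub_ne_zero.2 (ne_of_gt hcd)
  set k : ℝ := (B - A) / (β - α) with hk
  set k' : ℝ := (D - C) / (δ - γ) with hk'
  set P : ℝ → ℝ := fun y => A + (y - α) * k with hP
  set Q : ℝ → ℝ := fun y => C + (y - γ) * k' with hQ
  have hPcombo : ∀ σ : ℝ, P ((1 - σ) * α + σ * β) = (1 - σ) * A + σ * B := by
    intro σ; simp only [hP, hk]; field_simp; ring
  have hQcombo : ∀ τ : ℝ, Q ((1 - τ) * γ + τ * δ) = (1 - τ) * C + τ * D := by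
    intro τ; simp only [hQ, hk']; field_simp; ring
  have hPfx : P fx = gx := by rw [← hf1, hPcombo]; exact hg1
  have hQfx : Q fx = gx := by rw [← hf2, hQcombo]; exact hg2
  set m : ℝ := max α γ with hm
  set M : ℝ := min β δ with hM
  have hmfx : m ≤ fx := max_le hαfx hγfx
  have hfxM : fx ≤ M := le_min hfxβ hfxδ
  have hPm : P m < Q m := by
    rcases max_cases α γ with ⟨hme, hge⟩ | ⟨hme, hge⟩
    · obtain ⟨τ, hτ0, hτ1, hτe⟩ := seg_param_s15 hge (by linarith) hcd
      have h := H3 τ hτ0 hτ1 hτe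
      have hQm : Q m = (1 - τ) * C + τ * D := by rw [hm, hme, ← hτe, hQcombo]
      have hPmv : P m = A := by rw [hm, hme]; simp [hP]
      rw [hPmv, hQm]; exact h
    · obtain ⟨σ, hσ0, hσ1, hσe⟩ := seg_param_s15 hge.le (by linarith) hab
      have h := H1 σ hσ0 hσ1 hσe
      have hPmv : P m = (1 - σ) * A + σ * B := by rw [hm, hme, ← hσe, hPcombo]
      have hQm : Q m = C := by rw [hm, hme]; simp [hQ]
      rw [hPmv, hQm]; exact h
  have hPM : P M < Q M := by
    rcases min_cases β δ with ⟨hme, hge⟩ | ⟨hme, hge⟩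
    · obtain ⟨τ, hτ0, hτ1, hτe⟩ := seg_param_s15 (by linarith) hge hcd
      have h := H4 τ hτ0 hτ1 hτe
      have hQM : Q M = (1 - τ) * C + τ * D := by rw [hM, hme, ← hτe, hQcombo]
      have hPMv : P M = B := by rw [hM, hme]; simp only [hP, hk]; field_simp; ring
      rw [hPMv, hQM]; exact h
    · obtain ⟨σ, hσ0, hσ1, hσe⟩ := seg_param_s15 (by linarith) hge.le hab
      have h := H2 σ hσ0 hσ1 hσe
      have hPMv : P M = (1 - σ) * A + σ * B := by rw [hM, hme, ← hσe, hPcombo]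
      have hQM : Q M = D := by rw [hM, hme]; simp only [hQ, hk']; field_simp; ring
      rw [hPMv, hQM]; exact h
  have haff : (Q m - P m) * (M - fx) + (Q M - P M) * (fx - m) = (Q fx - P fx) * (M - m) := by
    simp only [hP, hQ]; ring
  rw [hPfx, hQfx, sub_self, zero_mul] at haff
  rcases eq_or_lt_of_le hmfx with hfm | hfm
  · rw [hfm, hPfx, hQfx] at hPm; exact lt_irrefl _ hPm
  rcases eq_or_lt_of_le hfxM with hfM | hfM
  · have t1 : (Q m - P m) * (M - fx) = 0 := by rw [← hfM]; ring
    have t2 : 0 < (Q M - P M) * (fx - m) := mul_pos (sub_pos.2 hPM) (sub_pos.2 hfm)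
    linarith
  · have t1 : 0 < (Q m - P m) * (M - fx) := mul_pos (sub_pos.2 hPm) (sub_pos.2 hfM)
    have t2 : 0 ≤ (Q M - P M) * (fx - m) := mul_nonneg (sub_pos.2 hPM).le (by linarith)
    linarith

private lemma key_s15 (α β γ δ A B C D fx gx l μ : ℝ)
    (hl0 : 0 ≤ l) (hl1 : l ≤ 1) (hμ0 : 0 ≤ μ) (hμ1 : μ ≤ 1)
    (hf1 : (1 - l) * α + l * β = fx) (hg1 : (1 - l) * A + l * B = gx)
    (hf2 : (1 - μ) * γ + μ * δ = fx) (hg2 : (1 - μ) * C + μ * D = gx)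
    (H1 : ∀ σ, 0 ≤ σ → σ ≤ 1 → (1 - σ) * α + σ * β = γ → (1 - σ) * A + σ * B < C)
    (H2 : ∀ σ, 0 ≤ σ → σ ≤ 1 → (1 - σ) * α + σ * β = δ → (1 - σ) * A + σ * B < D)
    (H3 : ∀ τ, 0 ≤ τ → τ ≤ 1 → (1 - τ) * γ + τ * δ = α → A < (1 - τ) * C + τ * D)
    (H4 : ∀ τ, 0 ≤ τ → τ ≤ 1 → (1 - τ) * γ + τ * δ = β → B < (1 - τ) * C + τ * D) :
    False := by
  rcases le_total α β with h1 | h1 <;> rcases le_total γ δ with h2 | h2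
  · exact key' α β γ δ A B C D fx gx l μ hl0 hl1 hμ0 hμ1 hf1 hg1 hf2 hg2 h1 h2 H1 H2 H3 H4
  · refine key' α β δ γ A B D C fx gx l (1 - μ) hl0 hl1 (by linarith) (by linarith)
      hf1 hg1 (by linarith) (by linarith) h1 h2 ?_ ?_ ?_ ?_
    · exact fun σ h0 h1' he => H2 σ h0 h1' he
    · exact fun σ h0 h1' he => H1 σ h0 h1' he
    · intro τ h0 h1' he
      have := H3 (1 - τ) (by linarith) (by linarith) (by linarith)
      linarith
    · intro τ h0 h1' he
      have := H4 (1 - τ) (by linarith) (by linarith) (by linarith)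
      linarith
  · refine key' β α γ δ B A C D fx gx (1 - l) μ (by linarith) (by linarith) hμ0 hμ1
      (by linarith) (by linarith) hf2 hg2 h1 h2 ?_ ?_ ?_ ?_
    · intro σ h0 h1' he
      have := H1 (1 - σ) (by linarith) (by linarith) (by linarith)
      linarith
    · intro σ h0 h1' he
      have := H2 (1 - σ) (by linarith) (by linarith) (by linarith)
      linarith
    · exact fun τ h0 h1' he => H4 τ h0 h1' he
    · exact fun τ h0 h1' he => H3 τ h0 h1' he
  · refine key' β α δ γ B A D C fx gx (1 - l) (1 - μ) (by linarith) (by linarith)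
      (by linarith) (by linarith) (by linarith) (by linarith) (by linarith) (by linarith) h1 h2 ?_ ?_ ?_ ?_
    · intro σ h0 h1' he
      have := H2 (1 - σ) (by linarith) (by linarith) (by linarith)
      linarith
    · intro σ h0 h1' he
      have := H1 (1 - σ) (by linarith) (by linarith) (by linarith)
      linarith
    · intro τ h0 h1' he
      have := H4 (1 - τ) (by linarith) (by linarith) (by linarith)
      linarith
    · intro τ h0 h1' he
      have := H3 (1 - τ) (by linarith) (by linarith) (by linarith)
      linarith

private lemma Hlt (C₁ : Set (EuclideanSpace ℝ (Fin 2))) (hC : Convex ℝ C₁)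
    (t : EuclideanSpace ℝ (Fin 2)) (hT : 0 < t 0 ^ 2 + t 1 ^ 2)
    (a b z : EuclideanSpace ℝ (Fin 2)) (ha : a ∈ C₁) (hb : b ∈ C₁)
    (hz : ∃ w ∈ C₁, w + t = z) (hz' : z ∉ C₁) :
    ∀ σ : ℝ, 0 ≤ σ → σ ≤ 1 →
      (1 - σ) * (t 1 * a 0 - t 0 * a 1) + σ * (t 1 * b 0 - t 0 * b 1)
        = t 1 * z 0 - t 0 * z 1 →
      (1 - σ) * (t 0 * a 0 + t 1 * a 1) + σ * (t 0 * b 0 + t 1 * b 1)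
        < t 0 * z 0 + t 1 * z 1 := by
  intro σ h0 h1 he
  have hp : (1 - σ) • a + σ • b ∈ C₁ := hC ha hb (by linarith) h0 (by ring)
  have hp0 : ((1 - σ) • a + σ • b) 0 = (1 - σ) * a 0 + σ * b 0 := by simp [smul_eq_mul]
  have hp1 : ((1 - σ) • a + σ • b) 1 = (1 - σ) * a 1 + σ * b 1 := by simp [smul_eq_mul]
  have h := lune_lt C₁ hC t hT z ((1 - σ) • a + σ • b) hz hz' hp
    (by rw [hp0, hp1]; linear_combination he)
  rw [hp0, hp1] at h
  linarith [h]

private lemma Hgt (C₁ : Set (EuclideanSpace ℝ (Fin 2))) (hC : Convex ℝ C₁)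
    (t : EuclideanSpace ℝ (Fin 2)) (hT : 0 < t 0 ^ 2 + t 1 ^ 2)
    (c d z : EuclideanSpace ℝ (Fin 2))
    (hcm : ∃ v ∈ C₁, v + t = c) (hdm : ∃ v ∈ C₁, v + t = d)
    (hz : z ∈ C₁) (hz' : ¬ ∃ w ∈ C₁, w + t = z) :
    ∀ τ : ℝ, 0 ≤ τ → τ ≤ 1 →
      (1 - τ) * (t 1 * c 0 - t 0 * c 1) + τ * (t 1 * d 0 - t 0 * d 1)
        = t 1 * z 0 - t 0 * z 1 →
      t 0 * z 0 + t 1 * z 1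
        < (1 - τ) * (t 0 * c 0 + t 1 * c 1) + τ * (t 0 * d 0 + t 1 * d 1) := by
  intro τ h0 h1 he
  obtain ⟨vc, hvc, rfl⟩ := hcm
  obtain ⟨vd, hvd, rfl⟩ := hdm
  have hq : ∃ v ∈ C₁, v + t = (1 - τ) • (vc + t) + τ • (vd + t) := by
    refine ⟨(1 - τ) • vc + τ • vd, hC hvc hvd (by linarith) h0 (by ring), ?_⟩
    ext i
    show ((1 - τ) * vc i + τ * vd i) + t i = (1 - τ) * (vc i + t i) + τ * (vd i + t i)
    ring
  have hq0 : ((1 - τ) • (vc + t) + τ • (vd + t)) 0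
      = (1 - τ) * ((vc + t) 0) + τ * ((vd + t) 0) := by simp [smul_eq_mul]; ring
  have hq1 : ((1 - τ) • (vc + t) + τ • (vd + t)) 1
      = (1 - τ) * ((vc + t) 1) + τ * ((vd + t) 1) := by simp [smul_eq_mul]; ring
  have h := lune_gt C₁ hC t hT z ((1 - τ) • (vc + t) + τ • (vd + t)) hz hz' hq
    (by rw [hq0, hq1]; linear_combination he)
  rw [hq0, hq1] at h
  linarith [h]

theorem stmt_15 (C₁ C₂ : Set (EuclideanSpace ℝ (Fin 2))) (hC : Convex ℝ C₁)
    (t : EuclideanSpace ℝ (Fin 2)) (ht : t ≠ 0)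
    (hC₂ : C₂ = (fun x => x + t) '' C₁)
    (a b c d : EuclideanSpace ℝ (Fin 2))
    (ha : a ∈ C₁ \ C₂) (hb : b ∈ C₁ \ C₂) (hc : c ∈ C₂ \ C₁) (hd : d ∈ C₂ \ C₁) :
    ¬ ∃ x, x ∈ segment ℝ a b ∧ x ∈ segment ℝ c d ∧
      x ∉ ({a, b, c, d} : Set (EuclideanSpace ℝ (Fin 2))) := by
  rintro ⟨x, hx1, hx2, -⟩
  have hT : 0 < t 0 ^ 2 + t 1 ^ 2 := by
    rcases eq_or_ne (t 0) 0 with h0 | h0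
    · rcases eq_or_ne (t 1) 0 with h1 | h1
      · exact absurd (by ext i; fin_cases i <;> simp [h0, h1]) ht
      · positivity
    · positivity
  -- unpack membership data
  have hmemc : ∃ v ∈ C₁, v + t = c := by
    have := hc.1; rw [hC₂] at this; obtain ⟨v, hv, hvt⟩ := this; exact ⟨v, hv, hvt⟩
  have hmemd : ∃ v ∈ C₁, v + t = d := by
    have := hd.1; rw [hC₂] at this; obtain ⟨v, hv, hvt⟩ := this; exact ⟨v, hv, hvt⟩
  have hnc : c ∉ C₁ := hc.2
  have hnd : d ∉ C₁ := hd.2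
  have hna : ¬ ∃ w ∈ C₁, w + t = a := by
    intro ⟨w, hw, hwt⟩; exact ha.2 (by rw [hC₂]; exact ⟨w, hw, hwt⟩)
  have hnb : ¬ ∃ w ∈ C₁, w + t = b := by
    intro ⟨w, hw, hwt⟩; exact hb.2 (by rw [hC₂]; exact ⟨w, hw, hwt⟩)
  -- segment parameters
  obtain ⟨u1, u2, hu1, hu2, hu12, hxab⟩ := hx1
  obtain ⟨v1, v2, hv1, hv2, hv12, hxcd⟩ := hx2
  have hxab0 : x 0 = u1 * a 0 + u2 * b 0 := by rw [← hxab]; simp [smul_eq_mul]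
  have hxab1 : x 1 = u1 * a 1 + u2 * b 1 := by rw [← hxab]; simp [smul_eq_mul]
  have hxcd0 : x 0 = v1 * c 0 + v2 * d 0 := by rw [← hxcd]; simp [smul_eq_mul]
  have hxcd1 : x 1 = v1 * c 1 + v2 * d 1 := by rw [← hxcd]; simp [smul_eq_mul]
  exact key_s15
    (t 1 * a 0 - t 0 * a 1) (t 1 * b 0 - t 0 * b 1)
    (t 1 * c 0 - t 0 * c 1) (t 1 * d 0 - t 0 * d 1)
    (t 0 * a 0 + t 1 * a 1) (t 0 * b 0 + t 1 * b 1)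
    (t 0 * c 0 + t 1 * c 1) (t 0 * d 0 + t 1 * d 1)
    (t 1 * x 0 - t 0 * x 1) (t 0 * x 0 + t 1 * x 1)
    u2 v2 hu2 (by linarith) hv2 (by linarith)
    (by rw [hxab0, hxab1]; have : (1 : ℝ) - u2 = u1 := by linarith
        rw [this]; ring)
    (by rw [hxab0, hxab1]; have : (1 : ℝ) - u2 = u1 := by linarith
        rw [this]; ring)
    (by rw [hxcd0, hxcd1]; have : (1 : ℝ) - v2 = v1 := by linarith
        rw [this]; ring)
    (by rw [hxcd0, hxcd1]; have : (1 : ℝ) - v2 = v1 := by linarith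
        rw [this]; ring)
    (Hlt C₁ hC t hT a b c ha.1 hb.1 hmemc hnc)
    (Hlt C₁ hC t hT a b d ha.1 hb.1 hmemd hnd)
    (Hgt C₁ hC t hT c d a hmemc hmemd ha.1 hna)
    (Hgt C₁ hC t hT c d b hmemc hmemd hb.1 hnb)
end

section
/- Let C ⊆ ℝ² be convex and let C₁, C₂ be homothets of C (sets of the form αᵢ·C + tᵢ with αᵢ > 0). Suppose a, b ∈ C₁ \ C₂ and c, d ∈ C₂ \ C₁. Then the closed segments [a,b] and [c,d] do not cross at a point interior to both. -/
private lemma mem3 {V : Type*} [AddCommGroup V] [Module ℝ V] {S : Set V} (hS : Convex ℝ S)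
    {p q r z : V} (μ₁ μ₂ μ₃ : ℝ) (hp : p ∈ S) (hq : q ∈ S) (hr : r ∈ S)
    (h1 : 0 ≤ μ₁) (h2 : 0 ≤ μ₂) (h3 : 0 ≤ μ₃)
    (hsum : μ₁ + μ₂ + μ₃ = 1) (hz : z = μ₁ • p + μ₂ • q + μ₃ • r) : z ∈ S := by
  have h := hS.sum_mem (t := (Finset.univ : Finset (Fin 3))) (w := ![μ₁, μ₂, μ₃])
      (z := ![p, q, r]) (by intro i _; fin_cases i <;> simpa)
      (by simp [Fin.sum_univ_three, hsum]) (by intro i _; fin_cases i <;> simpa)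
  rw [Fin.sum_univ_three] at h
  simp only [Matrix.cons_val_zero, Matrix.cons_val_one, Matrix.head_cons,
    Matrix.cons_val_two, Matrix.tail_cons] at h
  rwa [← hz] at h

private lemma cover (l β δ s t : ℝ) (hl : 0 < l) (hβ : 0 < β) (hδ : 0 < δ) :
    (1 ≤ l + s ∧ -(l + s - 1) ≤ t ∧ t ≤ δ * (l + s - 1)) ∨
    (β ≤ l*β - s ∧ -(l*β - s - β) ≤ t*β ∧ t*β ≤ δ * (l*β - s - β)) ∨
    (l ≤ 1 - t ∧ -(β * (1 - t - l)) ≤ s ∧ s ≤ 1 - t - l) ∨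
    (l*δ ≤ δ + t ∧ -(β * (δ + t - l*δ)) ≤ s*δ ∧ s*δ ≤ δ + t - l*δ) := by
  rcases le_total l 1 with hm | hm
  · rcases le_total 0 t with ht | ht
    · rcases le_total (s*δ) (t + (1-l)*δ) with h1 | h1
      · rcases le_total (-(β*(t + (1-l)*δ))) (s*δ) with h2 | h2
        · right; right; right
          exact ⟨by nlinarith, by nlinarith, by nlinarith⟩
        · right; left
          refine ⟨by nlinarith, by nlinarith [mul_nonneg ht hβ.le, mul_nonneg (mul_nonneg ht hβ.le) hδ.le], by nlinarith [mul_nonneg ht hβ.le, mul_nonneg (mul_nonneg ht hβ.le) hδ.le, mul_nonneg (mul_nonneg hδ.le hβ.le) ht]⟩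
      · left
        refine ⟨by nlinarith, by nlinarith, by nlinarith⟩
    · rcases le_total s ((1-l) - t) with h1 | h1
      · rcases le_total (-(β*((1-l) - t))) s with h2 | h2
        · right; right; left
          exact ⟨by nlinarith, by nlinarith, by nlinarith⟩
        · right; left
          refine ⟨by nlinarith, by nlinarith, by nlinarith [mul_nonneg (mul_nonneg hδ.le hβ.le) (neg_nonneg.2 ht), mul_le_mul_of_nonneg_left h2 hδ.le, mul_nonpos_of_nonpos_of_nonneg ht hβ.le]⟩
      · left
        refine ⟨by nlinarith, by nlinarith, by nlinarith⟩
  · rcases le_total 0 s with hs | hs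
    · rcases le_total t (δ * (l + s - 1)) with h1 | h1
      · rcases le_total (-(l + s - 1)) t with h2 | h2
        · left; exact ⟨by nlinarith, h2, h1⟩
        · right; right; left
          refine ⟨by nlinarith, by nlinarith, by nlinarith⟩
      · right; right; right
        refine ⟨by nlinarith [mul_nonneg hs hδ.le], by nlinarith [mul_nonneg hs hδ.le, mul_nonneg hβ.le (mul_nonneg hs hδ.le)], by nlinarith⟩
    · rcases le_total (t*β) (δ*(l*β - s - β)) with h1 | h1
      · rcases le_total (-(l*β - s - β)) (t*β) with h2 | h2
        · right; left; exact ⟨by nlinarith, h2, h1⟩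
        · right; right; left
          refine ⟨by nlinarith, by nlinarith, by nlinarith⟩
      · right; right; right
        refine ⟨by nlinarith [mul_nonneg (neg_nonneg.2 hs) hδ.le], by nlinarith [mul_nonneg (neg_nonneg.2 hs) hδ.le, mul_nonneg (mul_nonneg (neg_nonneg.2 hs) hδ.le) hβ.le], by nlinarith [mul_nonneg (neg_nonneg.2 hs) hδ.le, mul_nonneg (mul_nonneg (neg_nonneg.2 hs) hδ.le) hβ.le]⟩

set_option maxHeartbeats 1000000 in
private lemma core {V : Type*} [AddCommGroup V] [Module ℝ V]
    {C₁ C₂ : Set V} (conv₁ : Convex ℝ C₁) (conv₂ : Convex ℝ C₂)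
    {l : ℝ} (hl : 0 < l) {v : V} (hmem : ∀ y, y ∈ C₁ ↔ l • y + v ∈ C₂)
    {x a c : V} {β δ s t : ℝ} (hβ : 0 < β) (hδ : 0 < δ)
    (hx₁ : x ∈ C₁) (hx₂ : x ∈ C₂)
    (ha₁ : a ∈ C₁) (ha₂ : a ∉ C₂)
    (hb₁ : x - β • (a - x) ∈ C₁) (hb₂ : x - β • (a - x) ∉ C₂)
    (hc₂ : c ∈ C₂) (hc₁ : c ∉ C₁)
    (hd₂ : x - δ • (c - x) ∈ C₂) (hd₁ : x - δ • (c - x) ∉ C₁)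
    (hv : v = s • (a - x) + t • (c - x) + x - l • x) : False := by
  have hl' : l ≠ 0 := ne_of_gt hl
  have hβ' : β ≠ 0 := ne_of_gt hβ
  have hδ' : δ ≠ 0 := ne_of_gt hδ
  have hA2 : l • a + v ∈ C₂ := (hmem a).1 ha₁
  have hB2 : l • (x - β • (a - x)) + v ∈ C₂ := (hmem _).1 hb₁
  have hgc : l⁻¹ • (c - v) ∈ C₁ := (hmem _).2 (by rw [smul_inv_smul₀ hl']; simpa using hc₂)
  have hgd : l⁻¹ • (x - δ • (c - x) - v) ∈ C₁ :=
    (hmem _).2 (by rw [smul_inv_smul₀ hl']; simpa using hd₂)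
  rcases cover l β δ s t hl hβ hδ with ⟨h1, h2, h3⟩ | ⟨h1, h2, h3⟩ | ⟨h1, h2, h3⟩ | ⟨h1, h2, h3⟩
  · -- a ∈ C₂
    have hL : (0:ℝ) < l + s := by linarith
    have hL' : l + s ≠ 0 := ne_of_gt hL
    rcases le_total t 0 with ht | ht
    · exact ha₂ (mem3 conv₂ (1/(l+s)) (-t/(l+s)) ((l+s-1+t)/(l+s)) hA2 hc₂ hx₂
        (by positivity) (div_nonneg (by linarith) hL.le) (div_nonneg (by linarith) hL.le)
        (by field_simp; try ring) (by rw [hv]; match_scalars <;> (field_simp; try ring)))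
    · exact ha₂ (mem3 conv₂ (1/(l+s)) (t/(δ*(l+s))) ((δ*(l+s)-δ-t)/(δ*(l+s))) hA2 hd₂ hx₂
        (by positivity) (div_nonneg ht (by positivity)) (div_nonneg (by nlinarith) (by positivity))
        (by field_simp; try ring) (by rw [hv]; match_scalars <;> (field_simp; try ring)))
  · -- b ∈ C₂
    have hM : (0:ℝ) < l*β - s := by linarith
    have hM' : l*β - s ≠ 0 := ne_of_gt hM
    have hM'' : β*l - s ≠ 0 := by rw [mul_comm]; exact hM'
    rcases le_total t 0 with ht | ht
    · exact hb₂ (mem3 conv₂ (β/(l*β-s)) (-(t*β)/(l*β-s)) ((l*β-s-β+t*β)/(l*β-s)) hB2 hc₂ hx₂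
        (by positivity) (div_nonneg (by nlinarith) hM.le) (div_nonneg (by linarith) hM.le)
        (by field_simp; try ring) (by rw [hv]; match_scalars <;> (field_simp; try ring)))
    · exact hb₂ (mem3 conv₂ (β/(l*β-s)) (t*β/(δ*(l*β-s))) ((δ*(l*β-s)-δ*β-t*β)/(δ*(l*β-s))) hB2 hd₂ hx₂
        (by positivity) (div_nonneg (by nlinarith) (by positivity)) (div_nonneg (by nlinarith) (by positivity))
        (by field_simp; try ring) (by rw [hv]; match_scalars <;> (field_simp; try ring)))
  · -- c ∈ C₁
    have hN : (0:ℝ) < 1 - t := by linarith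
    have hN' : (1:ℝ) - t ≠ 0 := ne_of_gt hN
    rcases le_total 0 s with hs | hs
    · exact hc₁ (mem3 conv₁ (l/(1-t)) (s/(1-t)) ((1-t-l-s)/(1-t)) hgc ha₁ hx₁
        (by positivity) (div_nonneg hs hN.le) (div_nonneg (by linarith) hN.le)
        (by field_simp; try ring) (by rw [hv]; match_scalars <;> (field_simp; try ring)))
    · exact hc₁ (mem3 conv₁ (l/(1-t)) (-s/(β*(1-t))) ((β*(1-t)-β*l+s)/(β*(1-t))) hgc hb₁ hx₁
        (by positivity) (div_nonneg (by linarith) (by positivity)) (div_nonneg (by nlinarith) (by positivity))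
        (by field_simp; try ring) (by rw [hv]; match_scalars <;> (field_simp; try ring)))
  · -- d ∈ C₁
    have hK : (0:ℝ) < δ + t := by nlinarith
    have hK' : δ + t ≠ 0 := ne_of_gt hK
    rcases le_total 0 s with hs | hs
    · exact hd₁ (mem3 conv₁ (l*δ/(δ+t)) (δ*s/(δ+t)) ((δ+t-l*δ-δ*s)/(δ+t)) hgd ha₁ hx₁
        (by positivity) (div_nonneg (by positivity) hK.le) (div_nonneg (by nlinarith) hK.le)
        (by field_simp; try ring) (by rw [hv]; match_scalars <;> (field_simp; try ring)))
    · exact hd₁ (mem3 conv₁ (l*δ/(δ+t)) (-(δ*s)/(β*(δ+t))) ((β*(δ+t)-β*l*δ+δ*s)/(β*(δ+t))) hgd hb₁ hx₁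
        (by positivity) (div_nonneg (by nlinarith) (by positivity)) (div_nonneg (by nlinarith) (by positivity))
        (by field_simp; try ring) (by rw [hv]; match_scalars <;> (field_simp; try ring)))

theorem stmt_19 (C : Set (EuclideanSpace ℝ (Fin 2))) (hC : Convex ℝ C)
    (α₁ α₂ : ℝ) (hα₁ : 0 < α₁) (hα₂ : 0 < α₂)
    (t₁ t₂ : EuclideanSpace ℝ (Fin 2))
    (C₁ C₂ : Set (EuclideanSpace ℝ (Fin 2)))
    (hC₁ : C₁ = (fun x => α₁ • x + t₁) '' C)
    (hC₂ : C₂ = (fun x => α₂ • x + t₂) '' C)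
    (a b c d : EuclideanSpace ℝ (Fin 2))
    (ha : a ∈ C₁ \ C₂) (hb : b ∈ C₁ \ C₂) (hc : c ∈ C₂ \ C₁) (hd : d ∈ C₂ \ C₁) :
    ¬ ∃ x, x ∈ segment ℝ a b ∧ x ∈ segment ℝ c d ∧
      x ∉ ({a, b, c, d} : Set (EuclideanSpace ℝ (Fin 2))) := by
  rintro ⟨x, hxab, hxcd, hxne⟩
  simp only [Set.mem_insert_iff, Set.mem_singleton_iff, not_or] at hxne
  obtain ⟨hxa, hxb, hxc, hxd⟩ := hxne
  -- convexity of C₁ and C₂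
  have conv₁ : Convex ℝ C₁ := by
    rw [hC₁]
    rintro y₁ ⟨z₁, hz₁, rfl⟩ y₂ ⟨z₂, hz₂, rfl⟩ p q hp hq hpq
    obtain rfl : q = 1 - p := by linarith
    exact ⟨p • z₁ + (1-p) • z₂, hC hz₁ hz₂ hp hq hpq, by
      show α₁ • (p • z₁ + (1-p) • z₂) + t₁ = p • (α₁ • z₁ + t₁) + (1-p) • (α₁ • z₂ + t₁)
      module⟩
  have conv₂ : Convex ℝ C₂ := by
    rw [hC₂]
    rintro y₁ ⟨z₁, hz₁, rfl⟩ y₂ ⟨z₂, hz₂, rfl⟩ p q hp hq hpq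
    obtain rfl : q = 1 - p := by linarith
    exact ⟨p • z₁ + (1-p) • z₂, hC hz₁ hz₂ hp hq hpq, by
      show α₂ • (p • z₁ + (1-p) • z₂) + t₂ = p • (α₂ • z₁ + t₂) + (1-p) • (α₂ • z₂ + t₂)
      module⟩
  -- the homothety sending C₁ to C₂
  set l : ℝ := α₂ / α₁ with hldef
  have hl : 0 < l := div_pos hα₂ hα₁
  have hl' : l ≠ 0 := ne_of_gt hl
  have hlα : l * α₁ = α₂ := by rw [hldef]; field_simp
  set v : EuclideanSpace ℝ (Fin 2) := t₂ - l • t₁ with hvdef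
  have hmem : ∀ y, y ∈ C₁ ↔ l • y + v ∈ C₂ := by
    intro y
    rw [hC₁, hC₂]
    constructor
    · rintro ⟨z, hz, rfl⟩
      refine ⟨z, hz, ?_⟩
      show α₂ • z + t₂ = l • (α₁ • z + t₁) + v
      rw [hvdef, ← hlα]
      module
    · rintro ⟨z, hz, hzeq⟩
      refine ⟨z, hz, ?_⟩
      show α₁ • z + t₁ = y
      have hzeq' : α₂ • z + t₂ = l • y + v := hzeq
      have h3 : l • y = α₂ • z + t₂ - v := eq_sub_iff_add_eq.2 hzeq'.symm
      exact smul_right_injective (EuclideanSpace ℝ (Fin 2)) hl'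
        (show l • (α₁ • z + t₁) = l • y from by rw [h3, hvdef, ← hlα]; module)
  have hx₁ : x ∈ C₁ := conv₁.segment_subset ha.1 hb.1 hxab
  have hx₂ : x ∈ C₂ := conv₂.segment_subset hc.1 hd.1 hxcd
  -- express b and d
  obtain ⟨u₁, w₁, hu₁, hw₁, huw₁, heq₁⟩ := hxab
  obtain ⟨u₂, w₂, hu₂, hw₂, huw₂, heq₂⟩ := hxcd
  have hu₁' : u₁ ≠ 0 := by rintro rfl; apply hxb; rw [← heq₁]; simp [show w₁ = 1 by linarith]
  have hw₁' : w₁ ≠ 0 := by rintro rfl; apply hxa; rw [← heq₁]; simp [show u₁ = 1 by linarith]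
  have hu₂' : u₂ ≠ 0 := by rintro rfl; apply hxd; rw [← heq₂]; simp [show w₂ = 1 by linarith]
  have hw₂' : w₂ ≠ 0 := by rintro rfl; apply hxc; rw [← heq₂]; simp [show u₂ = 1 by linarith]
  have hβ : 0 < u₁ / w₁ := div_pos (lt_of_le_of_ne hu₁ (Ne.symm hu₁')) (lt_of_le_of_ne hw₁ (Ne.symm hw₁'))
  have hδ : 0 < u₂ / w₂ := div_pos (lt_of_le_of_ne hu₂ (Ne.symm hu₂')) (lt_of_le_of_ne hw₂ (Ne.symm hw₂'))
  have hbeq : b = x - (u₁/w₁) • (a - x) := by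
    obtain rfl : w₁ = 1 - u₁ := by linarith
    rw [← heq₁]
    have h1u : (1:ℝ) - u₁ ≠ 0 := hw₁'
    match_scalars <;> field_simp <;> ring
  have hdeq : d = x - (u₂/w₂) • (c - x) := by
    obtain rfl : w₂ = 1 - u₂ := by linarith
    rw [← heq₂]
    have h1u : (1:ℝ) - u₂ ≠ 0 := hw₂'
    match_scalars <;> field_simp <;> ring
  rw [hbeq] at hb
  rw [hdeq] at hd
  -- collinear or not
  have hAne : a - x ≠ 0 := sub_ne_zero.2 (by rintro rfl; exact ha.2 hx₂)
  by_cases hcol : ∃ γ : ℝ, c - x = γ • (a - x)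
  · obtain ⟨γ, hγ⟩ := hcol
    have hcx : c = x + γ • (a - x) := by rw [← hγ]; abel
    rcases le_or_gt γ 0 with hγ0 | hγ0
    · -- use d = x + (-(u₂/w₂)*γ) • (a-x), with coefficient ≥ 0
      set γ' : ℝ := -((u₂/w₂) * γ) with hγ'def
      have hγ'0 : 0 ≤ γ' := by rw [hγ'def]; nlinarith
      have hdx : x - (u₂/w₂) • (c - x) = x + γ' • (a - x) := by
        rw [hγ, hγ'def, smul_smul]; module
      rcases le_or_gt γ' 1 with hγ'1 | hγ'1
      · -- d ∈ [x, a] ⊆ C₁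
        exact hd.2 (by
          rw [hdx]
          have := conv₁ hx₁ ha.1 (by linarith : (0:ℝ) ≤ 1 - γ') hγ'0 (by ring)
          convert this using 1
          module)
      · -- a ∈ [x, d] ⊆ C₂
        have hγ'' : γ' ≠ 0 := by positivity
        apply ha.2
        have hmem2 := conv₂ hx₂ hd.1 (by
            have : (0:ℝ) < γ' := by linarith
            have := inv_le_one_of_one_le₀ hγ'1.le
            linarith [inv_pos.2 ‹(0:ℝ) < γ'›] : (0:ℝ) ≤ 1 - γ'⁻¹)
          (by positivity : (0:ℝ) ≤ γ'⁻¹) (by ring)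
        convert hmem2 using 1
        rw [hdx]
        match_scalars <;> (field_simp; try ring)
    · rcases le_or_gt γ 1 with hγ1 | hγ1
      · -- c ∈ [x, a] ⊆ C₁
        exact hc.2 (by
          rw [hcx]
          have := conv₁ hx₁ ha.1 (by linarith : (0:ℝ) ≤ 1 - γ) hγ0.le (by ring)
          convert this using 1
          module)
      · -- a ∈ [x, c] ⊆ C₂
        apply ha.2
        have hγ'' : γ ≠ 0 := ne_of_gt hγ0
        have hmem2 := conv₂ hx₂ hc.1 (by
            have := inv_le_one_of_one_le₀ hγ1.le
            linarith [inv_pos.2 hγ0] : (0:ℝ) ≤ 1 - γ⁻¹)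
          (by positivity : (0:ℝ) ≤ γ⁻¹) (by ring)
        convert hmem2 using 1
        rw [hcx]
        match_scalars <;> (field_simp; try ring)
  · -- non-collinear: solve for s, t
    set w : EuclideanSpace ℝ (Fin 2) := l • x + v - x with hwdef
    have hdep : ¬ LinearIndependent ℝ ![w, a - x, c - x] := by
      intro h
      have := h.fintype_card_le_finrank
      rw [finrank_euclideanSpace_fin] at this
      simp at this
    obtain ⟨g, hg, i, hi⟩ := Fintype.not_linearIndependent_iff.1 hdep
    rw [Fin.sum_univ_three] at hg
    simp only [Matrix.cons_val_zero, Matrix.cons_val_one, Matrix.head_cons,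
      Matrix.cons_val_two, Matrix.tail_cons] at hg
    by_cases h0 : g 0 = 0
    · rw [h0, zero_smul, zero_add] at hg
      by_cases h2 : g 2 = 0
      · rw [h2, zero_smul, add_zero] at hg
        by_cases h1 : g 1 = 0
        · exact hi (by fin_cases i <;> assumption)
        · exact hAne (by
            have h4 := smul_right_injective (EuclideanSpace ℝ (Fin 2)) h1 (by
              rw [hg, smul_zero] : g 1 • (a - x) = g 1 • (0 : EuclideanSpace ℝ (Fin 2)))
            exact h4)
      · apply hcol
        refine ⟨-(g 1)/(g 2), ?_⟩
        apply smul_right_injective (EuclideanSpace ℝ (Fin 2)) h2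
        show g 2 • (c - x) = g 2 • ((-(g 1)/(g 2)) • (a - x))
        have h1 : g 2 • (c - x) = -(g 1) • (a - x) := by
          linear_combination (norm := module) hg
        rw [h1, smul_smul, show g 2 * (-(g 1)/(g 2)) = -(g 1) from by field_simp]
    · refine core conv₁ conv₂ hl hmem hβ hδ hx₁ hx₂ ha.1 ha.2 hb.1 hb.2 hc.1 hc.2 hd.1 hd.2
        (s := -(g 1)/(g 0)) (t := -(g 2)/(g 0)) ?_
      have hsolve : w = (-(g 1)/(g 0)) • (a - x) + (-(g 2)/(g 0)) • (c - x) := by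
        apply smul_right_injective (EuclideanSpace ℝ (Fin 2)) h0
        show g 0 • w = g 0 • ((-(g 1)/(g 0)) • (a - x) + (-(g 2)/(g 0)) • (c - x))
        have h1 : g 0 • w = -(g 1) • (a - x) + -(g 2) • (c - x) := by
          linear_combination (norm := module) hg
        rw [h1, smul_add, smul_smul, smul_smul,
          show g 0 * (-(g 1)/(g 0)) = -(g 1) from by field_simp,
          show g 0 * (-(g 2)/(g 0)) = -(g 2) from by field_simp]
      have hvw : v = w + x - l • x := by rw [hwdef]; abel
      rw [hvw, hsolve]
      try abel
end
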